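/- arXiv:math/0211110 — 7 statements merged into one kernel-verified Lean document; each statement's English description precedes it below -/
import Mathlib

section
/- In a bi-orderable group G, if some nonzero power γ^n of an element γ is central in G, then γ itself is central in G. -/
/-- A group is bi-orderable if it admits a strict total order invariant under
left and right multiplication. -/
def IsBiOrderable (G : Type*) [Group G] : Prop :=
  ∃ r : G → G → Prop, IsStrictTotalOrder G r ∧
    (∀ f g h : G, r g h → r (f * g) (f * h)) ∧
    (∀ f g h : G, r g h → r (g * f) (h * f))

/-- In a bi-orderable group, an element with a central nonzero power is central. -/
theorem central_of_pow_central {G : Type*} [Group G] (h : IsBiOrderable G)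
    (γ : G) (n : ℤ) (hn : n ≠ 0) (hc : γ ^ n ∈ Subgroup.center G) :
    γ ∈ Subgroup.center G := by
  obtain ⟨r, hsto, hL, hR⟩ := h
  haveI := hsto
  have htrans : ∀ {a b c : G}, r a b → r b c → r a c := fun hab hbc =>
    _root_.trans hab hbc
  have hirr : ∀ a : G, ¬ r a a := fun a => irrefl a
  -- powers preserve the order
  have hpow : ∀ (m : ℕ), 0 < m → ∀ a b : G, r a b → r (a ^ m) (b ^ m) := by
    intro m hm
    induction m with
    | zero => omega
    | succ k ih =>
      intro a b hab
      rcases Nat.eq_zero_or_pos k with hk | hk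
      · subst hk; simpa using hab
      · have h1 : r (a ^ k * a) (b ^ k * a) := hR _ _ _ (ih hk a b hab)
        have h2 : r (b ^ k * a) (b ^ k * b) := hL _ _ _ hab
        have := htrans h1 h2
        simpa [pow_succ] using this
  set m : ℕ := n.natAbs with hm
  have hmpos : 0 < m := Int.natAbs_pos.mpr hn
  have hcm : γ ^ m ∈ Subgroup.center G := by
    rcases Int.natAbs_eq n with he | he
    · have : γ ^ (m : ℤ) = γ ^ n := by rw [← he]
      rw [← zpow_natCast, this]; exact hc
    · have : γ ^ (m : ℤ) = (γ ^ n)⁻¹ := by rw [he, zpow_neg, inv_inv]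
      rw [← zpow_natCast, this]; exact inv_mem hc
  rw [Subgroup.mem_center_iff]
  intro g
  set b : G := g⁻¹ * γ * g with hb
  have hbm : b ^ m = γ ^ m := by
    have h1 : b = g⁻¹ * γ * g⁻¹⁻¹ := by rw [hb]; group
    have h2 : b ^ m = g⁻¹ * γ ^ m * g⁻¹⁻¹ := by rw [h1, conj_pow]
    rw [inv_inv] at h2
    rw [h2]
    have h3 := Subgroup.mem_center_iff.mp hcm g
    rw [mul_assoc, ← h3, inv_mul_cancel_left]
  have hbγ : b = γ := by
    rcases trichotomous_of r b γ with hlt | heq | hgt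
    · have := hpow m hmpos b γ hlt
      rw [hbm] at this
      exact absurd this (hirr _)
    · exact heq
    · have := hpow m hmpos γ b hgt
      rw [hbm] at this
      exact absurd this (hirr _)
  have hfin : g⁻¹ * γ * g = γ := hbγ
  calc g * γ = g * (g⁻¹ * γ * g) := by rw [hfin]
    _ = γ * g := by group
end

section
/- If G is a bi-orderable group, then G is locally indicable: every nontrivial finitely generated subgroup of G admits a surjective homomorphism onto ℤ. -/
/-!
Let `K` be a nontrivial finitely generated bi-ordered group and `g > 1` an element lying above
all generators and their inverses, so that every element of `K` lies below some power of `g`.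
Let `⌊x⌋` be the largest `m` with `g ^ m ≤ x`. Bi-invariance of the order makes `⌊·⌋` a
quasimorphism, `⌊x⌋ + ⌊y⌋ ≤ ⌊x * y⌋ ≤ ⌊x⌋ + ⌊y⌋ + 1`, so by Fekete's lemma the translation number
`τ x = lim ⌊x ^ n⌋ / n` exists; it is conjugation invariant and `τ g = 1`. Since `y * x ≤ x * y`
or the reverse, one has `(x * y) ^ n ≤ x ^ n * y ^ n` and `y ^ n * x ^ n ≤ (y * x) ^ n` (or the
same with `x`, `y` swapped), which together with conjugation invariance make `τ` additive.
The image of `τ : K → ℝ` is then a nontrivial finitely generated torsion-free abelian group, hence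
free, and so maps onto `ℤ`.
-/

open Filter Topology

theorem exists_addMonoidHom_int_surjective (B : Type*) [AddCommGroup B] [AddGroup.FG B]
    [IsAddTorsionFree B] [Nontrivial B] : ∃ c : B →+ ℤ, Function.Surjective c := by
  let b := Module.Free.chooseBasis ℤ B
  have : Nonempty (Module.Free.ChooseBasisIndex ℤ B) := b.index_nonempty
  let i := Classical.arbitrary (Module.Free.ChooseBasisIndex ℤ B)
  exact ⟨(b.coord i).toAddMonoidHom, fun n => ⟨n • b i, by simp⟩⟩

theorem AddMonoidHom.exists_int_surjective_of_ne_zero {K A : Type*} [AddGroup K] [AddGroup.FG K]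
    [AddCommGroup A] [IsAddTorsionFree A] {f : K →+ A} (hf : f ≠ 0) :
    ∃ c : K →+ ℤ, Function.Surjective c := by
  have : Nontrivial f.range := by
    obtain ⟨x, hx⟩ := DFunLike.ne_iff.1 hf
    exact ⟨⟨f.rangeRestrict x, 0, fun h => hx (congrArg Subtype.val h)⟩⟩
  obtain ⟨c, hc⟩ := exists_addMonoidHom_int_surjective f.range
  exact ⟨c.comp f.rangeRestrict, hc.comp f.rangeRestrict_surjective⟩

theorem le_of_tendsto_div_of_le_add_const {a b : ℕ → ℝ} {s t C : ℝ}
    (ha : Tendsto (fun n => a n / n) atTop (𝓝 s)) (hb : Tendsto (fun n => b n / n) atTop (𝓝 t))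
    (hab : ∀ n, a n ≤ b n + C) : s ≤ t := by
  have hbC : Tendsto (fun n : ℕ => (b n + C) / n) atTop (𝓝 t) := by
    simpa only [add_div, add_zero] using hb.add (tendsto_const_div_atTop_nhds_zero_nat C)
  exact le_of_tendsto_of_tendsto' ha hbC fun n => div_le_div_of_nonneg_right (hab n) n.cast_nonneg

section Monoid

variable {M : Type*} [Monoid M] [Preorder M] [MulLeftMono M] [MulRightMono M] {x y : M}

theorem pow_mul_le_mul_pow_of_mul_le (h : y * x ≤ x * y) (n : ℕ) : y ^ n * x ≤ x * y ^ n := by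
  induction n with
  | zero => simp
  | succ n ih =>
    calc y ^ (n + 1) * x = y * (y ^ n * x) := by rw [pow_succ', mul_assoc]
      _ ≤ y * (x * y ^ n) := mul_le_mul_right ih y
      _ = y * x * y ^ n := (mul_assoc _ _ _).symm
      _ ≤ x * y * y ^ n := mul_le_mul_left h _
      _ = x * y ^ (n + 1) := by rw [mul_assoc, ← pow_succ']

theorem mul_pow_le_pow_mul_pow_of_mul_le (h : y * x ≤ x * y) (n : ℕ) :
    (x * y) ^ n ≤ x ^ n * y ^ n := by
  induction n with
  | zero => simp
  | succ n ih =>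
    calc (x * y) ^ (n + 1) = (x * y) ^ n * (x * y) := pow_succ _ _
      _ ≤ x ^ n * y ^ n * (x * y) := mul_le_mul_left ih _
      _ = x ^ n * (y ^ n * x) * y := by simp only [mul_assoc]
      _ ≤ x ^ n * (x * y ^ n) * y :=
        mul_le_mul_left (mul_le_mul_right (pow_mul_le_mul_pow_of_mul_le h n) _) _
      _ = x ^ (n + 1) * y ^ (n + 1) := by simp only [pow_succ, mul_assoc]

theorem pow_mul_pow_le_mul_pow_of_mul_le (h : y * x ≤ x * y) (n : ℕ) :
    y ^ n * x ^ n ≤ (y * x) ^ n := by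
  induction n with
  | zero => simp
  | succ n ih =>
    calc y ^ (n + 1) * x ^ (n + 1) = y * (y ^ n * x) * x ^ n := by
          simp only [pow_succ', mul_assoc]
      _ ≤ y * (x * y ^ n) * x ^ n :=
        mul_le_mul_left (mul_le_mul_right (pow_mul_le_mul_pow_of_mul_le h n) _) _
      _ = y * x * (y ^ n * x ^ n) := by simp only [mul_assoc]
      _ ≤ y * x * (y * x) ^ n := mul_le_mul_right ih _
      _ = (y * x) ^ (n + 1) := (pow_succ' _ _).symm

end Monoid

theorem one_lt_of_forall_lt_pow {M : Type*} [Monoid M] [LinearOrder M] [MulLeftMono M] {g : M}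
    (hg : ∀ x : M, ∃ n : ℕ, x < g ^ n) : 1 < g := by
  by_contra! h
  obtain ⟨n, hn⟩ := hg 1
  exact hn.not_ge (pow_le_one' h n)

theorem zpow_right_strictMono' {G : Type*} [Group G] [Preorder G] [MulLeftStrictMono G] {g : G}
    (hg : 1 < g) : StrictMono fun m : ℤ => g ^ m :=
  strictMono_int_of_lt_succ fun m => by
    rw [zpow_add_one]
    exact lt_mul_of_one_lt_right' _ hg

noncomputable def zpowFloor {K : Type*} [Group K] [LE K] (g x : K) : ℤ :=
  sSup {m : ℤ | g ^ m ≤ x}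

noncomputable def translationNumber {K : Type*} [Group K] [LE K] (g x : K) : ℝ :=
  limUnder atTop fun n : ℕ => (zpowFloor g (x ^ n) : ℝ) / n

section BiOrdered

variable {K : Type*} [Group K] [LinearOrder K] [MulLeftMono K] [MulRightMono K]

theorem exists_forall_lt_pow [Group.FG K] [Nontrivial K] :
    ∃ g : K, ∀ x : K, ∃ n : ℕ, x < g ^ n := by
  obtain ⟨S, hS, hfin⟩ := Group.fg_iff.1 ‹Group.FG K›
  obtain ⟨b, hb⟩ := (hfin.union hfin.inv).bddAbove
  obtain ⟨a, ha⟩ : ∃ a : K, 1 < a := by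
    obtain ⟨y, hy⟩ := exists_ne (1 : K)
    rcases hy.lt_or_gt with h | h
    exacts [⟨y⁻¹, one_lt_inv'.2 h⟩, ⟨y, h⟩]
  set g := max a b
  have hbound : ∀ x : K, ∃ n : ℕ, x ≤ g ^ n ∧ x⁻¹ ≤ g ^ n := by
    intro x
    have hx : x ∈ Subgroup.closure S := hS ▸ Subgroup.mem_top x
    induction hx using Subgroup.closure_induction with
    | mem s hs =>
      refine ⟨1, ?_, ?_⟩ <;> rw [pow_one] <;> refine (hb ?_).trans (le_max_right _ _)
      exacts [Or.inl hs, Or.inr (by rwa [Set.mem_inv, inv_inv])]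
    | one => exact ⟨0, by simp⟩
    | mul x y _ _ hx hy =>
      obtain ⟨m, hxm, hxm'⟩ := hx
      obtain ⟨n, hyn, hyn'⟩ := hy
      refine ⟨m + n, ?_, ?_⟩
      · rw [pow_add]; exact mul_le_mul' hxm hyn
      · rw [mul_inv_rev, add_comm, pow_add]; exact mul_le_mul' hyn' hxm'
    | inv x _ hx =>
      obtain ⟨n, hxn, hxn'⟩ := hx
      exact ⟨n, hxn', by rwa [inv_inv]⟩
  refine ⟨g, fun x => ?_⟩
  obtain ⟨n, hxn, -⟩ := hbound x
  refine ⟨n + 1, hxn.trans_lt ?_⟩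
  rw [pow_succ]
  exact lt_mul_of_one_lt_right' _ (ha.trans_le (le_max_left _ _))

variable {g : K}

theorem zpow_le_iff_le_zpowFloor (hg : ∀ x : K, ∃ n : ℕ, x < g ^ n) {x : K} {m : ℤ} :
    g ^ m ≤ x ↔ m ≤ zpowFloor g x := by
  have hmono := zpow_right_strictMono' (one_lt_of_forall_lt_pow hg)
  have hbdd : BddAbove {m : ℤ | g ^ m ≤ x} := by
    obtain ⟨n, hn⟩ := hg x
    exact ⟨n, fun m hm => (hmono.lt_iff_lt.1 (hm.trans_lt (by rwa [zpow_natCast]))).le⟩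
  have hne : {m : ℤ | g ^ m ≤ x}.Nonempty := by
    obtain ⟨n, hn⟩ := hg x⁻¹
    refine ⟨-n, show g ^ (-n : ℤ) ≤ x from ?_⟩
    rw [zpow_neg, zpow_natCast]
    exact (inv_lt'.1 hn).le
  exact ⟨fun h => le_csSup hbdd h, fun h => (hmono.monotone h).trans (Int.csSup_mem hne hbdd)⟩

theorem lt_zpow_iff_zpowFloor_lt (hg : ∀ x : K, ∃ n : ℕ, x < g ^ n) {x : K} {m : ℤ} :
    x < g ^ m ↔ zpowFloor g x < m := by
  simpa only [not_le] using (zpow_le_iff_le_zpowFloor hg).not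

theorem zpow_zpowFloor_le (hg : ∀ x : K, ∃ n : ℕ, x < g ^ n) (x : K) : g ^ zpowFloor g x ≤ x :=
  (zpow_le_iff_le_zpowFloor hg).2 le_rfl

theorem lt_zpow_zpowFloor_add_one (hg : ∀ x : K, ∃ n : ℕ, x < g ^ n) (x : K) :
    x < g ^ (zpowFloor g x + 1) :=
  (lt_zpow_iff_zpowFloor_lt hg).2 (lt_add_one _)

theorem zpowFloor_mono (hg : ∀ x : K, ∃ n : ℕ, x < g ^ n) {x y : K} (hxy : x ≤ y) :
    zpowFloor g x ≤ zpowFloor g y :=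
  (zpow_le_iff_le_zpowFloor hg).1 ((zpow_zpowFloor_le hg x).trans hxy)

theorem zpowFloor_zpow_self (hg : ∀ x : K, ∃ n : ℕ, x < g ^ n) (m : ℤ) : zpowFloor g (g ^ m) = m :=
  le_antisymm
    (Int.lt_add_one_iff.1 ((lt_zpow_iff_zpowFloor_lt hg).1
      (zpow_right_strictMono' (one_lt_of_forall_lt_pow hg) (lt_add_one m))))
    ((zpow_le_iff_le_zpowFloor hg).1 le_rfl)

theorem zpowFloor_add_le_mul (hg : ∀ x : K, ∃ n : ℕ, x < g ^ n) (x y : K) :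
    zpowFloor g x + zpowFloor g y ≤ zpowFloor g (x * y) :=
  (zpow_le_iff_le_zpowFloor hg).1 <| by
    rw [zpow_add]
    exact mul_le_mul' (zpow_zpowFloor_le hg x) (zpow_zpowFloor_le hg y)

theorem zpowFloor_mul_le (hg : ∀ x : K, ∃ n : ℕ, x < g ^ n) (x y : K) :
    zpowFloor g (x * y) ≤ zpowFloor g x + zpowFloor g y + 1 := by
  have : x * y < g ^ (zpowFloor g x + 1 + (zpowFloor g y + 1)) := by
    rw [zpow_add]
    exact mul_lt_mul_of_lt_of_lt (lt_zpow_zpowFloor_add_one hg x) (lt_zpow_zpowFloor_add_one hg y)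
  have := (lt_zpow_iff_zpowFloor_lt hg).1 this
  omega

theorem zpowFloor_pow_le (hg : ∀ x : K, ∃ n : ℕ, x < g ^ n) (x : K) (n : ℕ) :
    zpowFloor g (x ^ n) ≤ n * (zpowFloor g x + 1) := by
  have : x ^ n ≤ g ^ ((n : ℤ) * (zpowFloor g x + 1)) := by
    rw [mul_comm, zpow_mul, zpow_natCast]
    exact pow_le_pow_left' (lt_zpow_zpowFloor_add_one hg x).le n
  simpa only [zpowFloor_zpow_self hg] using zpowFloor_mono hg this

theorem tendsto_translationNumber (hg : ∀ x : K, ∃ n : ℕ, x < g ^ n) (x : K) :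
    Tendsto (fun n : ℕ => (zpowFloor g (x ^ n) : ℝ) / n) atTop (𝓝 (translationNumber g x)) := by
  have hsub : Subadditive fun n => -(zpowFloor g (x ^ n) : ℝ) := fun m n => by
    have : (zpowFloor g (x ^ m) : ℝ) + zpowFloor g (x ^ n) ≤ zpowFloor g (x ^ (m + n)) := by
      rw [pow_add]; exact_mod_cast zpowFloor_add_le_mul hg _ _
    linarith
  have hbdd : BddBelow (Set.range fun n : ℕ => -(zpowFloor g (x ^ n) : ℝ) / n) := by
    refine ⟨min (-(zpowFloor g x + 1 : ℝ)) 0, ?_⟩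
    rintro _ ⟨n, rfl⟩
    rcases n.eq_zero_or_pos with rfl | hn
    · simp
    · refine (min_le_left _ _).trans ?_
      rw [le_div_iff₀ (by positivity)]
      have : (zpowFloor g (x ^ n) : ℝ) ≤ n * (zpowFloor g x + 1) := by
        exact_mod_cast zpowFloor_pow_le hg x n
      linarith
  exact tendsto_nhds_limUnder
    ⟨-hsub.lim, by simpa only [neg_div, neg_neg] using (hsub.tendsto_lim hbdd).neg⟩

theorem translationNumber_self (hg : ∀ x : K, ∃ n : ℕ, x < g ^ n) : translationNumber g g = 1 := by
  refine tendsto_nhds_unique (tendsto_translationNumber hg g) (tendsto_const_nhds.congr' ?_)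
  filter_upwards [eventually_ne_atTop 0] with n hn
  rw [← zpow_natCast, zpowFloor_zpow_self hg, Int.cast_natCast, div_self (Nat.cast_ne_zero.2 hn)]

theorem translationNumber_conj (hg : ∀ x : K, ∃ n : ℕ, x < g ^ n) (h x : K) :
    translationNumber g (h * x * h⁻¹) = translationNumber g x := by
  set c := zpowFloor g h + zpowFloor g h⁻¹
  have hlow : ∀ z, zpowFloor g z + c ≤ zpowFloor g (h * z * h⁻¹) := fun z => by
    have := zpowFloor_add_le_mul hg h z
    have := zpowFloor_add_le_mul hg (h * z) h⁻¹
    omega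
  have hup : ∀ z, zpowFloor g (h * z * h⁻¹) ≤ zpowFloor g z + (c + 2) := fun z => by
    have := zpowFloor_mul_le hg h z
    have := zpowFloor_mul_le hg (h * z) h⁻¹
    omega
  refine le_antisymm
    (le_of_tendsto_div_of_le_add_const (C := ((c + 2 : ℤ) : ℝ))
      (tendsto_translationNumber hg _) (tendsto_translationNumber hg x) fun n => ?_)
    (le_of_tendsto_div_of_le_add_const (C := ((-c : ℤ) : ℝ))
      (tendsto_translationNumber hg x) (tendsto_translationNumber hg _) fun n => ?_)
  · rw [conj_pow]
    exact_mod_cast hup (x ^ n)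
  · rw [conj_pow]
    exact_mod_cast (by linarith [hlow (x ^ n)] :
      zpowFloor g (x ^ n) ≤ zpowFloor g (h * x ^ n * h⁻¹) + -c)

theorem translationNumber_mul_comm (hg : ∀ x : K, ∃ n : ℕ, x < g ^ n) (x y : K) :
    translationNumber g (x * y) = translationNumber g (y * x) := by
  simpa only [← mul_assoc, mul_inv_cancel_right] using translationNumber_conj hg x (y * x)

theorem translationNumber_mul_of_mul_le (hg : ∀ x : K, ∃ n : ℕ, x < g ^ n) {x y : K}
    (hxy : y * x ≤ x * y) :
    translationNumber g (x * y) = translationNumber g x + translationNumber g y := by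
  have hx := tendsto_translationNumber hg x
  have hy := tendsto_translationNumber hg y
  have hle : translationNumber g (x * y) ≤ translationNumber g x + translationNumber g y :=
    le_of_tendsto_div_of_le_add_const (C := 1)
      (b := fun n => (zpowFloor g (x ^ n) : ℝ) + zpowFloor g (y ^ n))
      (tendsto_translationNumber hg _)
      (by simpa only [add_div] using hx.add hy) fun n => by
        exact_mod_cast (zpowFloor_mono hg (mul_pow_le_pow_mul_pow_of_mul_le hxy n)).trans
          (zpowFloor_mul_le hg _ _)
  have hge : translationNumber g y + translationNumber g x ≤ translationNumber g (y * x) :=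
    le_of_tendsto_div_of_le_add_const (C := 0)
      (a := fun n => (zpowFloor g (y ^ n) : ℝ) + zpowFloor g (x ^ n))
      (by simpa only [add_div] using hy.add hx)
      (tendsto_translationNumber hg _) fun n => by
        rw [add_zero]
        exact_mod_cast (zpowFloor_add_le_mul hg _ _).trans
          (zpowFloor_mono hg (pow_mul_pow_le_mul_pow_of_mul_le hxy n))
  rw [← translationNumber_mul_comm hg] at hge
  linarith

theorem translationNumber_mul (hg : ∀ x : K, ∃ n : ℕ, x < g ^ n) (x y : K) :
    translationNumber g (x * y) = translationNumber g x + translationNumber g y := by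
  rcases le_total (y * x) (x * y) with hxy | hyx
  · exact translationNumber_mul_of_mul_le hg hxy
  · rw [translationNumber_mul_comm hg, translationNumber_mul_of_mul_le hg hyx, add_comm]

noncomputable def translationNumberHom (hg : ∀ x : K, ∃ n : ℕ, x < g ^ n) : Additive K →+ ℝ :=
  AddMonoidHom.mk' (fun x => translationNumber g x.toMul) fun _ _ => translationNumber_mul hg _ _

theorem exists_monoidHom_int_surjective_of_fg [Group.FG K] [Nontrivial K] :
    ∃ ψ : K →* Multiplicative ℤ, Function.Surjective ψ := by
  obtain ⟨g, hg⟩ := exists_forall_lt_pow (K := K)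
  have hne : translationNumberHom hg ≠ 0 := fun h => by
    simpa [translationNumberHom, translationNumber_self hg] using
      DFunLike.congr_fun h (Additive.ofMul g)
  obtain ⟨c, hc⟩ := (translationNumberHom hg).exists_int_surjective_of_ne_zero hne
  exact ⟨AddMonoidHom.toMultiplicativeRight c,
    Multiplicative.ofAdd.surjective.comp (hc.comp Additive.ofMul.surjective)⟩

end BiOrdered

namespace IsBiOrderable

variable {G : Type*} [Group G]

theorem subgroup (h : IsBiOrderable G) (H : Subgroup G) : IsBiOrderable H := by
  obtain ⟨r, hr, hleft, hright⟩ := h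
  exact ⟨fun a b => r a b,
    (RelEmbedding.preimage ⟨Subtype.val, Subtype.val_injective⟩ r).isStrictTotalOrder,
    fun f g h => hleft f g h, fun f g h => hright f g h⟩

theorem exists_linearOrder (h : IsBiOrderable G) :
    ∃ _ : LinearOrder G, MulLeftMono G ∧ MulRightMono G := by
  classical
  obtain ⟨r, hr, hleft, hright⟩ := h
  let : LinearOrder G := linearOrderOfSTO r
  have : MulLeftStrictMono G := ⟨fun f _ _ => hleft f _ _⟩
  have : MulRightStrictMono G := ⟨fun f _ _ => hright f _ _⟩
  exact ⟨_, mulLeftMono_of_mulLeftStrictMono G, mulRightMono_of_mulRightStrictMono G⟩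

end IsBiOrderable

/-- A bi-orderable group is locally indicable: every nontrivial finitely
generated subgroup surjects onto `ℤ`. -/
theorem biOrderable_locallyIndicable {G : Type*} [Group G] (h : IsBiOrderable G) :
    ∀ H : Subgroup G, H ≠ ⊥ → H.FG →
      ∃ φ : H →* Multiplicative ℤ, Function.Surjective φ := by
  intro H hne hfg
  obtain ⟨_, _, _⟩ := (h.subgroup H).exists_linearOrder
  have := (Subgroup.nontrivial_iff_ne_bot H).2 hne
  have := (Group.fg_iff_subgroup_fg H).2 hfg
  exact exists_monoidHom_int_surjective_of_fg
end

section
/- If every nontrivial finitely generated subgroup of a group G admits a nontrivial left-orderable quotient, then G is left-orderable. (Burns–Hale theorem; in particular, every locally indicable group is left-orderable.) -/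
/-!
A left order is the same as a positive cone: a subsemigroup `P` with `1 ∉ P` containing `g`
or `g⁻¹` for every `g ≠ 1`. By compactness (an ultrafilter on the finite subsets of `G`) it
suffices to find, for every finite `S ⊆ G`, a subsemigroup avoiding `1` that decides the sign
of each element of `S`. This goes by induction on `S`: a nontrivial homomorphism `φ` from `⟨S⟩`
to a left-orderable group orders the elements of `S` outside `ker φ` through the cone of the
target, the elements of `S` inside `ker φ` form a smaller set ordered by induction, and the two
are combined lexicographically.
-/

/-- A group is left-orderable if it admits a strict total order invariant under
left multiplication. -/
def IsLeftOrderable (G : Type*) [Group G] : Prop :=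
  ∃ r : G → G → Prop, IsStrictTotalOrder G r ∧ ∀ f g h : G, r g h → r (f * g) (f * h)

namespace Subsemigroup

variable {G H L : Type*} [Group G] [Group H] [Group L]

def IsPositiveConeOn (P : Subsemigroup G) (S : Set G) : Prop :=
  (1 : G) ∉ P ∧ ∀ g ∈ S, g ≠ 1 → g ∈ P ∨ g⁻¹ ∈ P

theorem IsPositiveConeOn.mono {P : Subsemigroup G} {S T : Set G} (hP : P.IsPositiveConeOn T)
    (hST : S ⊆ T) : P.IsPositiveConeOn S :=
  ⟨hP.1, fun g hg => hP.2 g (hST hg)⟩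

theorem IsPositiveConeOn.comap {P : Subsemigroup G} {S : Set G} {f : H →* G}
    (hf : Function.Injective f) (hP : P.IsPositiveConeOn S) :
    (P.comap f.toMulHom).IsPositiveConeOn (f ⁻¹' S) := by
  refine ⟨fun h1 => hP.1 (by simpa using h1), fun x hx hx1 => ?_⟩
  have hfx : f x ≠ 1 := (map_ne_one_iff f hf).2 hx1
  simpa using hP.2 (f x) hx hfx

theorem IsPositiveConeOn.map {P : Subsemigroup H} {S : Set G} {f : H →* G}
    (hf : Function.Injective f) (hP : P.IsPositiveConeOn (f ⁻¹' S)) (hS : S ⊆ Set.range f) :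
    (P.map f.toMulHom).IsPositiveConeOn S := by
  refine ⟨?_, ?_⟩
  · rintro ⟨x, hx, hx1⟩
    obtain rfl : x = 1 := (map_eq_one_iff f hf).1 hx1
    exact hP.1 hx
  · rintro g hg hg1
    obtain ⟨x, rfl⟩ := hS hg
    rcases hP.2 x hg (by rintro rfl; exact hg1 (map_one f)) with hx | hx
    · exact Or.inl ⟨x, hx, rfl⟩
    · exact Or.inr ⟨x⁻¹, hx, map_inv f x⟩

/-- The positive cone of the order on `H` that compares `f x` first, using `Q`, and breaks ties
inside `ker f` using `P`. -/
def lex (f : H →* L) (P : Subsemigroup H) (Q : Subsemigroup L) : Subsemigroup H where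
  carrier := {x | f x ∈ Q ∨ (f x = 1 ∧ x ∈ P)}
  mul_mem' := by
    rintro x y (hx | ⟨hx1, hx⟩) (hy | ⟨hy1, hy⟩) <;> simp only [Set.mem_ofPred_eq, map_mul]
    · exact Or.inl (Q.mul_mem hx hy)
    · exact Or.inl (by rwa [hy1, mul_one])
    · exact Or.inl (by rwa [hx1, one_mul])
    · exact Or.inr ⟨by rw [hx1, hy1, one_mul], P.mul_mem hx hy⟩

theorem IsPositiveConeOn.lex {f : H →* L} {P : Subsemigroup H} {Q : Subsemigroup L}
    {S : Set H} (hP : P.IsPositiveConeOn {x ∈ S | f x = 1}) (hQ : Q.IsPositiveConeOn (f '' S)) :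
    (lex f P Q).IsPositiveConeOn S := by
  refine ⟨?_, fun x hx hx1 => ?_⟩
  · rintro (h | ⟨-, h⟩)
    · exact hQ.1 (by rwa [map_one] at h)
    · exact hP.1 h
  by_cases hfx : f x = 1
  · rcases hP.2 x ⟨hx, hfx⟩ hx1 with h | h
    · exact Or.inl (Or.inr ⟨hfx, h⟩)
    · exact Or.inr (Or.inr ⟨by rw [map_inv, hfx, inv_one], h⟩)
  · rcases hQ.2 (f x) ⟨x, hx, rfl⟩ hfx with h | h
    · exact Or.inl (Or.inl h)
    · exact Or.inr (Or.inl (by rwa [map_inv]))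

end Subsemigroup

open Subsemigroup

theorem isLeftOrderable_iff_exists_isPositiveConeOn_univ {G : Type*} [Group G] :
    IsLeftOrderable G ↔ ∃ P : Subsemigroup G, P.IsPositiveConeOn Set.univ := by
  constructor
  · rintro ⟨r, hr, hinv⟩
    refine ⟨⟨{x | r 1 x}, fun {x y} hx hy => trans_of r hx (by simpa using hinv x 1 y hy)⟩,
      irrefl_of r 1, fun x _ hx1 => ?_⟩
    rcases trichotomous_of r 1 x with h | h | h
    · exact Or.inl h
    · exact absurd h.symm hx1
    · exact Or.inr (by simpa using hinv x⁻¹ x 1 h)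
  · rintro ⟨P, hP1, hP⟩
    refine ⟨fun g h => g⁻¹ * h ∈ P, { trichotomous := ?_, irrefl := ?_, trans := ?_ }, ?_⟩
    · intro a b hab hba
      by_contra hne
      rcases hP (a⁻¹ * b) trivial (by rwa [Ne, inv_mul_eq_one]) with h | h
      · exact hab h
      · exact hba (by simpa using h)
    · intro a ha
      exact hP1 (by simpa using ha)
    · intro a b c hab hbc
      simpa [mul_assoc] using P.mul_mem hab hbc
    · intro f g h hgh
      simpa [mul_assoc] using hgh

theorem MonoidHom.exists_apply_ne_one_of_ne_one {G M : Type*} [Group G] [Monoid M] {S : Set G}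
    {φ : Subgroup.closure S →* M} (hφ : φ ≠ 1) :
    ∃ g, ∃ hg : g ∈ S, φ ⟨g, Subgroup.subset_closure hg⟩ ≠ 1 := by
  by_contra! h
  exact hφ (MonoidHom.eq_of_eqOn_dense Subgroup.closure_closure_coe_preimage fun x hx => h x hx)

theorem exists_isPositiveConeOn_univ {G : Type*} [Group G]
    (h : ∀ S : Finset G, ∃ P : Subsemigroup G, P.IsPositiveConeOn S) :
    ∃ P : Subsemigroup G, P.IsPositiveConeOn Set.univ := by
  choose C hC using h
  let U : Ultrafilter (Finset G) := .of .atTop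
  refine ⟨⟨{x | ∀ᶠ S in ↑U, x ∈ C S}, fun hx hy => ?_⟩, fun h1 => ?_,
    fun g _ hg1 => ?_⟩
  · filter_upwards [hx, hy] with S using (C S).mul_mem
  · obtain ⟨S, hS⟩ := h1.exists
    exact (hC S).1 hS
  · have hg : ∀ᶠ S in (U : Filter (Finset G)), g ∈ S := Ultrafilter.of_le _ <|
      (Filter.eventually_ge_atTop {g}).mono fun S => Finset.singleton_subset_iff.1
    exact Ultrafilter.eventually_or.1 (hg.mono fun S hgS => (hC S).2 g hgS hg1)

theorem exists_isPositiveConeOn_finset_of_forall_fg {G : Type*} [Group G]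
    (h : ∀ H : Subgroup G, H ≠ ⊥ → H.FG →
      ∃ (L : Type v) (_ : Group L), IsLeftOrderable L ∧ ∃ φ : H →* L, φ ≠ 1)
    (S : Finset G) : ∃ P : Subsemigroup G, P.IsPositiveConeOn S := by
  classical
  induction S using Finset.strongInduction with
  | _ S ih =>
  set H := Subgroup.closure (S : Set G)
  by_cases hH : H = ⊥
  · exact ⟨⊥, Subsemigroup.notMem_bot, fun g hg hg1 =>
      absurd (Subgroup.closure_eq_bot_iff.1 hH hg) hg1⟩
  obtain ⟨L, _, hL, φ, hφ⟩ := h H hH ⟨S, rfl⟩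
  obtain ⟨Q, hQ⟩ := isLeftOrderable_iff_exists_isPositiveConeOn_univ.1 hL
  obtain ⟨g, hgS, hg⟩ := φ.exists_apply_ne_one_of_ne_one hφ
  let S₀ := S.filter fun x => ∀ hx : x ∈ H, φ ⟨x, hx⟩ = 1
  obtain ⟨P₀, hP₀⟩ := ih S₀ (Finset.filter_ssubset.2 ⟨g, hgS, fun h => hg (h _)⟩)
  have hlex : (lex φ (P₀.comap H.subtype.toMulHom) Q).IsPositiveConeOn (H.subtype ⁻¹' S) :=
    IsPositiveConeOn.lex
      ((hP₀.comap H.subtype_injective).mono fun x ⟨hxS, hx1⟩ =>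
        Finset.mem_filter.2 ⟨hxS, fun _ => hx1⟩)
      (hQ.mono (Set.subset_univ _))
  have hSH : (S : Set G) ⊆ Set.range H.subtype := by
    rw [Subgroup.coe_subtype, Subtype.range_coe]
    exact Subgroup.subset_closure
  exact ⟨_, hlex.map H.subtype_injective hSH⟩

/-- (Burns–Hale) If every nontrivial finitely generated subgroup of `G` admits
a surjective homomorphism onto a nontrivial left-orderable group, then `G` is
left-orderable. -/
theorem burns_hale {G : Type u} [Group G]
    (h : ∀ H : Subgroup G, H ≠ ⊥ → H.FG →
      ∃ (L : Type u) (inst : Group L), Nontrivial L ∧ @IsLeftOrderable L inst ∧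
        ∃ φ : H →* L, Function.Surjective φ) :
    IsLeftOrderable G := by
  rw [isLeftOrderable_iff_exists_isPositiveConeOn_univ]
  refine exists_isPositiveConeOn_univ <|
    exists_isPositiveConeOn_finset_of_forall_fg fun H hH hfg => ?_
  obtain ⟨L, _, _, hL, φ, hφ⟩ := h H hH hfg
  refine ⟨L, _, hL, φ, fun hφ1 => ?_⟩
  obtain ⟨x, hx⟩ := exists_ne (1 : L)
  obtain ⟨y, rfl⟩ := hφ x
  exact hx (by rw [hφ1, MonoidHom.one_apply])
end

section
/- The group G = ⟨x₁, y₁, x₂, y₂ | x₁² = y₁³, x₂² = y₂³, x₁² = x₂ y₂⁻¹, x₂² = x₁ y₁⁻¹⟩ is not left-orderable. -/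
/-- Relators for `⟨x₁, y₁, x₂, y₂ | x₁² = y₁³, x₂² = y₂³, x₁² = x₂y₂⁻¹,
x₂² = x₁y₁⁻¹⟩`, with `x₁ = of 0`, `y₁ = of 1`, `x₂ = of 2`, `y₂ = of 3`. -/
def trefoilDoubleRels : Set (FreeGroup (Fin 4)) :=
  { FreeGroup.of 0 ^ 2 * (FreeGroup.of 1 ^ 3)⁻¹,
    FreeGroup.of 2 ^ 2 * (FreeGroup.of 3 ^ 3)⁻¹,
    FreeGroup.of 0 ^ 2 * (FreeGroup.of 2 * (FreeGroup.of 3)⁻¹)⁻¹,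
    FreeGroup.of 2 ^ 2 * (FreeGroup.of 0 * (FreeGroup.of 1)⁻¹)⁻¹ }

/-!
In a left-ordered group, `x² = y³` forces `x` and `y` to have the same sign, and `x ↦ x²` preserves
signs. Let `x₁, y₁, x₂, y₂` satisfy the relations and suppose `x₁ > 1`, so `y₁ > 1`.
If `x₂ ≥ 1`, then `x₁ = x₂² y₁` and `x₂ = x₁² y₂` give `x₁ < x₁² ≤ x₂ ≤ x₂² < x₁`.
If `x₂ ≤ 1`, the element `y₁ x₂² = y₁ x₁ y₁⁻¹` squares to `y₁ x₁² y₁⁻¹ = x₁²`, hence is positive,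
and likewise `y₂ x₁² ≤ 1`; since `x₁²` and `x₂²` commute,
`1 < y₁² = x₁² y₁⁻¹ < x₁² x₂² = x₂² x₁² = y₂² (y₂ x₁²) ≤ 1`.
Reversing the order rules out `x₁ < 1`, so `x₁ = 1`. But in the presented group `x₁ ≠ 1`, as it
survives in the quotient `ℤ/5` where `xᵢ ↦ 1`, `yᵢ ↦ -1`.
-/

section PowSign

variable {M : Type*} [Monoid M] [LinearOrder M] [MulLeftMono M]

theorem one_lt_iff_one_lt_of_pow_eq_pow {x y : M} {m n : ℕ} (hm : m ≠ 0) (hn : n ≠ 0)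
    (h : x ^ m = y ^ n) : 1 < x ↔ 1 < y := by
  rw [← one_lt_pow_iff hm, h, one_lt_pow_iff hn]

theorem one_le_iff_one_le_of_pow_eq_pow {x y : M} {m n : ℕ} (hm : m ≠ 0) (hn : n ≠ 0)
    (h : x ^ m = y ^ n) : 1 ≤ x ↔ 1 ≤ y := by
  rw [← one_le_pow_iff hm, h, one_le_pow_iff hn]

theorem le_one_iff_le_one_of_pow_eq_pow {x y : M} {m n : ℕ} (hm : m ≠ 0) (hn : n ≠ 0)
    (h : x ^ m = y ^ n) : x ≤ 1 ↔ y ≤ 1 := by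
  rw [← pow_le_one_iff hm, h, pow_le_one_iff hn]

end PowSign

structure TrefoilDoubleRelations {G : Type*} [Group G] (x₁ y₁ x₂ y₂ : G) : Prop where
  sq_eq_cube₁ : x₁ ^ 2 = y₁ ^ 3
  sq_eq_cube₂ : x₂ ^ 2 = y₂ ^ 3
  sq_eq₁ : x₁ ^ 2 = x₂ * y₂⁻¹
  sq_eq₂ : x₂ ^ 2 = x₁ * y₁⁻¹

namespace TrefoilDoubleRelations

variable {G : Type*} [Group G] {x₁ y₁ x₂ y₂ : G}

theorem symm (h : TrefoilDoubleRelations x₁ y₁ x₂ y₂) : TrefoilDoubleRelations x₂ y₂ x₁ y₁ :=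
  ⟨h.sq_eq_cube₂, h.sq_eq_cube₁, h.sq_eq₂, h.sq_eq₁⟩

theorem eq_sq_mul (h : TrefoilDoubleRelations x₁ y₁ x₂ y₂) : x₂ = x₁ ^ 2 * y₂ :=
  (eq_mul_inv_iff_mul_eq.1 h.sq_eq₁).symm

theorem commute_sq_sq (h : TrefoilDoubleRelations x₁ y₁ x₂ y₂) : Commute (x₁ ^ 2) (x₂ ^ 2) := by
  have hy₂ : Commute y₂⁻¹ (x₂ ^ 2) := h.sq_eq_cube₂ ▸ (Commute.self_pow y₂ 3).inv_left
  exact h.sq_eq₁ ▸ (Commute.self_pow x₂ 2).mul_left hy₂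

theorem mul_sq_sq (h : TrefoilDoubleRelations x₁ y₁ x₂ y₂) : (y₁ * x₂ ^ 2) ^ 2 = x₁ ^ 2 := by
  rw [h.sq_eq₂, ← mul_assoc, conj_pow, h.sq_eq_cube₁]
  group

variable [LinearOrder G] [MulLeftMono G]

theorem false_of_one_lt_of_one_le (h : TrefoilDoubleRelations x₁ y₁ x₂ y₂)
    (hx₁ : 1 < x₁) (hx₂ : 1 ≤ x₂) : False := by
  have hy₁ : 1 < y₁ :=
    (one_lt_iff_one_lt_of_pow_eq_pow two_ne_zero three_ne_zero h.sq_eq_cube₁).1 hx₁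
  have hy₂ : 1 ≤ y₂ :=
    (one_le_iff_one_le_of_pow_eq_pow two_ne_zero three_ne_zero h.sq_eq_cube₂).1 hx₂
  refine lt_irrefl x₁ ?_
  calc x₁ < x₁ ^ 2 := by rw [sq]; exact lt_mul_of_one_lt_right' x₁ hx₁
    _ ≤ x₂ := by rw [h.eq_sq_mul]; exact le_mul_of_one_le_right' hy₂
    _ ≤ x₂ ^ 2 := by rw [sq]; exact le_mul_of_one_le_right' hx₂
    _ < x₁ := by rw [h.symm.eq_sq_mul]; exact lt_mul_of_one_lt_right' _ hy₁

theorem false_of_one_lt_of_le_one (h : TrefoilDoubleRelations x₁ y₁ x₂ y₂)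
    (hx₁ : 1 < x₁) (hx₂ : x₂ ≤ 1) : False := by
  have hy₁ : 1 < y₁ :=
    (one_lt_iff_one_lt_of_pow_eq_pow two_ne_zero three_ne_zero h.sq_eq_cube₁).1 hx₁
  have hy₂ : y₂ ≤ 1 :=
    (le_one_iff_le_one_of_pow_eq_pow two_ne_zero three_ne_zero h.sq_eq_cube₂).1 hx₂
  have h₁ : y₁⁻¹ < x₂ ^ 2 := inv_lt_iff_one_lt_mul'.2 <|
    (one_lt_iff_one_lt_of_pow_eq_pow two_ne_zero two_ne_zero h.mul_sq_sq).2 hx₁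
  have h₂ : y₂ * x₁ ^ 2 ≤ 1 :=
    (le_one_iff_le_one_of_pow_eq_pow two_ne_zero two_ne_zero h.symm.mul_sq_sq).2 hx₂
  refine lt_irrefl (1 : G) ?_
  calc 1 < y₁ ^ 2 := one_lt_pow' hy₁ two_ne_zero
    _ = x₁ ^ 2 * y₁⁻¹ := by rw [h.sq_eq_cube₁]; group
    _ < x₁ ^ 2 * x₂ ^ 2 := mul_lt_mul_right h₁ _
    _ = x₂ ^ 2 * x₁ ^ 2 := h.commute_sq_sq.eq
    _ = y₂ ^ 2 * (y₂ * x₁ ^ 2) := by rw [h.sq_eq_cube₂]; group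
    _ ≤ y₂ ^ 2 := mul_le_of_le_one_right' h₂
    _ ≤ 1 := pow_le_one' hy₂ 2

theorem not_one_lt (h : TrefoilDoubleRelations x₁ y₁ x₂ y₂) : ¬ 1 < x₁ := fun hx₁ =>
  (le_total 1 x₂).elim (h.false_of_one_lt_of_one_le hx₁) (h.false_of_one_lt_of_le_one hx₁)

theorem eq_one (h : TrefoilDoubleRelations x₁ y₁ x₂ y₂) : x₁ = 1 :=
  le_antisymm (not_lt.1 h.not_one_lt) (not_lt.1 (not_one_lt (G := Gᵒᵈ) h))

end TrefoilDoubleRelations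

theorem IsLeftOrderable.exists_linearOrder {G : Type*} [Group G] (hG : IsLeftOrderable G) :
    ∃ _ : LinearOrder G, MulLeftMono G := by
  classical
  obtain ⟨r, _, hmul⟩ := hG
  let := linearOrderOfSTO r
  have : MulLeftStrictMono G := ⟨fun f _ _ => hmul f _ _⟩
  exact ⟨_, mulLeftMono_of_mulLeftStrictMono G⟩

namespace PresentedGroup

theorem trefoilDoubleRelations_of :
    TrefoilDoubleRelations (G := PresentedGroup trefoilDoubleRels) (of 0) (of 1) (of 2) (of 3) :=
  ⟨mk_eq_mk_of_mul_inv_mem (by simp [trefoilDoubleRels]),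
    mk_eq_mk_of_mul_inv_mem (by simp [trefoilDoubleRels]),
    mk_eq_mk_of_mul_inv_mem (by simp [trefoilDoubleRels]),
    mk_eq_mk_of_mul_inv_mem (by simp [trefoilDoubleRels])⟩

theorem trefoilDouble_of_zero_ne_one : (of 0 : PresentedGroup trefoilDoubleRels) ≠ 1 := by
  let f : Fin 4 → Multiplicative (ZMod 5) := ![.ofAdd 1, .ofAdd (-1), .ofAdd 1, .ofAdd (-1)]
  have hf : ∀ r ∈ trefoilDoubleRels, FreeGroup.lift f r = 1 := by
    rintro r (rfl | rfl | rfl | rfl) <;> decide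
  intro h
  have := congrArg (toGroup hf) h
  rw [toGroup.of, map_one] at this
  exact absurd this (by decide)

end PresentedGroup

/-- (Boileau–Short–Wiest) The group
`⟨x₁, y₁, x₂, y₂ | x₁² = y₁³, x₂² = y₂³, x₁² = x₂y₂⁻¹, x₂² = x₁y₁⁻¹⟩`
is not left-orderable. -/
theorem trefoilDoubleGroup_not_leftOrderable :
    ¬ IsLeftOrderable (PresentedGroup trefoilDoubleRels) := fun hG =>
  have ⟨_, _⟩ := hG.exists_linearOrder
  PresentedGroup.trefoilDouble_of_zero_ne_one PresentedGroup.trefoilDoubleRelations_of.eq_one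
end

section
/- In the group G = ⟨x, y | x²y² central⟩ (the fundamental group of the nontrivial orientable circle bundle over the Klein bottle), the element x² is central; consequently G is not bi-orderable, since x is not central in G (G surjects onto ℤ/2 * ℤ/2 by killing x² and y², which is non-abelian), contradicting the fact that in a bi-orderable group an element with a central power is central. -/
/-- Relators making `x²y²` central in `⟨x, y | x²y² central⟩`, with
`x = of 0`, `y = of 1`: the commutators `[x²y², x]` and `[x²y², y]`. -/
def kleinBundleRels : Set (FreeGroup (Fin 2)) :=
  { (FreeGroup.of 0 ^ 2 * FreeGroup.of 1 ^ 2) * FreeGroup.of 0 *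
      (FreeGroup.of 0 ^ 2 * FreeGroup.of 1 ^ 2)⁻¹ * (FreeGroup.of 0)⁻¹,
    (FreeGroup.of 0 ^ 2 * FreeGroup.of 1 ^ 2) * FreeGroup.of 1 *
      (FreeGroup.of 0 ^ 2 * FreeGroup.of 1 ^ 2)⁻¹ * (FreeGroup.of 1)⁻¹ }

/-!
`y` commutes with `x²y²` and with `y²`, hence with `x²`; since `x²` also commutes with `x`,
it is central. In a bi-ordered group roots are unique, so if `g ^ n` is central then
`h g h⁻¹`, having the same `n`-th power as `g`, equals `g`: an element with a central power is
central. But `x` is not central, since `x ↦ s₀`, `y ↦ s₁` maps the group onto the infinite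
dihedral group `⟨s₀, s₁ | s₀², s₁²⟩`, where `s₀ s₁ ≠ s₁ s₀`.
-/

open Subgroup

theorem IsBiOrderable.isMulTorsionFree {G : Type*} [Group G] (h : IsBiOrderable G) :
    IsMulTorsionFree G := by
  classical
  obtain ⟨r, hr, hleft, hright⟩ := h
  let := linearOrderOfSTO r
  have : MulLeftStrictMono G := ⟨fun f _ _ hgh => hleft f _ _ hgh⟩
  have : MulRightStrictMono G := ⟨fun f _ _ hgh => hright f _ _ hgh⟩
  infer_instance

theorem mem_center_of_pow_mem_center {G : Type*} [Group G] [IsMulTorsionFree G] {g : G} {n : ℕ}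
    (hn : n ≠ 0) (hg : g ^ n ∈ center G) : g ∈ center G := by
  refine mem_center_iff.mpr fun h => ?_
  have hconj : (h * g * h⁻¹) ^ n = g ^ n := by
    rw [conj_pow, mem_center_iff.mp hg h, mul_inv_cancel_right]
  calc h * g = h * g * h⁻¹ * h := by group
    _ = g * h := by rw [pow_left_injective hn hconj]

theorem PresentedGroup.mem_center_iff_forall_commute_of {α : Type*} {rels : Set (FreeGroup α)}
    {g : PresentedGroup rels} : g ∈ center (PresentedGroup rels) ↔ ∀ i, Commute g (of i) := by
  simp only [center_eq_iInf (closure_range_of rels), mem_iInf, Set.forall_mem_range,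
    mem_centralizer_singleton_iff, Commute, SemiconjBy]

abbrev KleinBundleGroup := PresentedGroup kleinBundleRels

namespace KleinBundleGroup

abbrev x : KleinBundleGroup := PresentedGroup.of 0

abbrev y : KleinBundleGroup := PresentedGroup.of 1

theorem commute_xsq_ysq_y : Commute (x ^ 2 * y ^ 2) y := by
  rw [← commutatorElement_eq_one_iff_commute, commutatorElement_def]
  simpa [PresentedGroup.of] using
    PresentedGroup.one_of_mem (rels := kleinBundleRels) (Set.mem_insert_of_mem _ rfl)

theorem xsq_mem_center : x ^ 2 ∈ center KleinBundleGroup := by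
  refine PresentedGroup.mem_center_iff_forall_commute_of.mpr fun i => ?_
  fin_cases i
  · exact (Commute.refl x).pow_left 2
  · simpa using commute_xsq_ysq_y.mul_left ((Commute.refl y).pow_left 2).inv_left

/-- `DihedralGroup 0` is the infinite dihedral group, as `ZMod 0 = ℤ`. -/
def toInfiniteDihedral : KleinBundleGroup →* DihedralGroup 0 :=
  PresentedGroup.toGroup (f := ![.sr 0, .sr 1]) <| by
    rintro w (rfl | rfl) <;> simp [sq]

theorem x_not_mem_center : x ∉ center KleinBundleGroup := fun hx => by
  have hcomm : Commute (DihedralGroup.sr 0 : DihedralGroup 0) (.sr 1) :=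
    (PresentedGroup.mem_center_iff_forall_commute_of.mp hx 1).map toInfiniteDihedral
  simp [Commute, SemiconjBy, DihedralGroup.sr_mul_sr] at hcomm

end KleinBundleGroup

/-- In `G = ⟨x, y | x²y² central⟩` (the fundamental group of the nontrivial
orientable circle bundle over the Klein bottle), `x²` is central, and `G` is not
bi-orderable. -/
theorem kleinBundleGroup_xsq_central_not_biOrderable :
    (PresentedGroup.of (rels := kleinBundleRels) 0) ^ 2 ∈
        Subgroup.center (PresentedGroup kleinBundleRels) ∧
      ¬ IsBiOrderable (PresentedGroup kleinBundleRels) := by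
  refine ⟨KleinBundleGroup.xsq_mem_center, fun hbo => ?_⟩
  have := hbo.isMulTorsionFree
  exact KleinBundleGroup.x_not_mem_center
    (mem_center_of_pow_mem_center two_ne_zero KleinBundleGroup.xsq_mem_center)
end

section
/- Let A ∈ GL₂(ℤ) be a matrix with two distinct real eigenvalues of irrational slope eigenvectors, at least one of which is a positive eigenvalue. Then there exists a bi-ordering of ℤ² whose positive cone is invariant under the action of A; consequently the semidirect product ℤ² ⋊_A ℤ is bi-orderable. -/
/-!
For an eigenvector `v` of `lam₂`, the functional `g ↦ det [g, v]` on `ℤ²` is multiplied by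
`lam₁ = tr A - lam₂ > 0` under `A`, and it vanishes at no nonzero lattice point because `v` has
irrational slope. Its positive half-plane is therefore an `A`-invariant positive cone on `ℤ²`.
Ordering `ℤ² ⋊_A ℤ` lexicographically, first by the `ℤ`-coordinate and then by this cone, gives a
bi-ordering: conjugation fixes the `ℤ`-coordinate and acts on elements of `ℤ²` through powers of
`A`, and a cone preserved by `A` is also preserved by `A⁻¹`.
-/

open Matrix Polynomial

/-- The automorphism of `ℤ²` (written multiplicatively) given by a matrix
`A ∈ GL₂(ℤ)`. -/
noncomputable def glAut (A : GL (Fin 2) ℤ) : MulAut (Multiplicative (Fin 2 → ℤ)) :=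
  AddEquiv.toMultiplicative
    ((Matrix.GeneralLinearGroup.toLin A).toLinearEquiv.toAddEquiv)

/-- The monodromy action of `ℤ` on `ℤ²` generated by `A ∈ GL₂(ℤ)`. -/
noncomputable def monodromy (A : GL (Fin 2) ℤ) :
    Multiplicative ℤ →* MulAut (Multiplicative (Fin 2 → ℤ)) :=
  zpowersHom _ (glAut A)

open Function Set

/-- The positive cone `{g | 1 < g}` of a bi-ordering, which is recovered as
`x < y ↔ x⁻¹ * y ∈ P`. -/
structure IsBiOrderCone {G : Type*} [Group G] (P : Set G) : Prop where
  mul_mem : ∀ a ∈ P, ∀ b ∈ P, a * b ∈ P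
  one_notMem : (1 : G) ∉ P
  mem_or_inv_mem : ∀ g : G, g ≠ 1 → g ∈ P ∨ g⁻¹ ∈ P
  conj_mem : ∀ g ∈ P, ∀ h : G, h⁻¹ * g * h ∈ P

namespace IsBiOrderCone

variable {G H : Type*} [Group G] [Group H] {P : Set G}

theorem inv_notMem (hP : IsBiOrderCone P) {g : G} (hg : g ∈ P) : g⁻¹ ∉ P := fun hg' =>
  hP.one_notMem (mul_inv_cancel g ▸ hP.mul_mem g hg g⁻¹ hg')

theorem xor_mem_inv (hP : IsBiOrderCone P) {g : G} (hg : g ≠ 1) : Xor (g ∈ P) (g⁻¹ ∈ P) := by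
  rcases hP.mem_or_inv_mem g hg with h | h
  · exact Or.inl ⟨h, hP.inv_notMem h⟩
  · exact Or.inr ⟨h, fun h' => hP.inv_notMem h' h⟩

theorem isBiOrderable (hP : IsBiOrderCone P) : IsBiOrderable G := by
  refine ⟨fun x y => x⁻¹ * y ∈ P, { trichotomous := ?_, irrefl := ?_, trans := ?_ }, ?_, ?_⟩
  · intro x y hxy hyx
    by_contra hne
    rcases hP.mem_or_inv_mem (x⁻¹ * y) (by rwa [Ne, inv_mul_eq_one]) with h | h
    · exact hxy h
    · exact hyx (by simpa using h)
  · intro x h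
    exact hP.one_notMem (by simpa using h)
  · intro x y z hxy hyz
    simpa [mul_assoc] using hP.mul_mem _ hxy _ hyz
  · intro f g h hgh
    simpa [mul_assoc] using hgh
  · intro f g h hgh
    simpa [mul_assoc] using hP.conj_mem _ hgh f

theorem comap (hP : IsBiOrderCone P) (f : H →* G) (hf : Injective f) :
    IsBiOrderCone (f ⁻¹' P) where
  mul_mem a ha b hb := by simpa using hP.mul_mem _ ha _ hb
  one_notMem := by simpa using hP.one_notMem
  mem_or_inv_mem g hg := by
    simpa using hP.mem_or_inv_mem (f g) ((map_ne_one_iff f hf).2 hg)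
  conj_mem g hg h := by simpa using hP.conj_mem _ hg (f h)

theorem mapsTo_inv (hP : IsBiOrderCone P) {e : MulAut G} (he : MapsTo e P P) :
    MapsTo ⇑e⁻¹ P P := by
  intro x hx
  by_contra hy
  have hy1 : e⁻¹ x ≠ 1 := fun h => hP.one_notMem <| by
    rwa [← MulAut.apply_inv_self _ e x, h, map_one] at hx
  have := he ((hP.mem_or_inv_mem _ hy1).resolve_left hy)
  exact hP.inv_notMem hx (by simpa using this)

theorem mapsTo_zpow (hP : IsBiOrderCone P) {e : MulAut G} (he : MapsTo e P P) (n : ℤ) :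
    MapsTo ⇑(e ^ n) P P := by
  induction n using Int.induction_on with
  | zero => exact mapsTo_id P
  | succ k ih => rw [_root_.zpow_add_one]; exact ih.comp he
  | pred k ih => rw [_root_.zpow_sub_one]; exact ih.comp (hP.mapsTo_inv he)

end IsBiOrderCone

theorem isBiOrderCone_one_lt (G : Type*) [CommGroup G] [LinearOrder G] [IsOrderedMonoid G] :
    IsBiOrderCone {g : G | 1 < g} where
  mul_mem a ha b hb := one_lt_mul' ha hb
  one_notMem := lt_irrefl 1
  mem_or_inv_mem g hg := by simpa using hg.lt_or_gt.symm
  conj_mem g hg h := by simpa using hg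

namespace SemidirectProduct

variable {N G : Type*} [Group N] [Group G]

def lexCone (φ : G →* MulAut N) (P : Set N) (Q : Set G) : Set (N ⋊[φ] G) :=
  {x | x.right ∈ Q ∨ x.right = 1 ∧ x.left ∈ P}

theorem isBiOrderCone_lexCone {φ : G →* MulAut N} {P : Set N} {Q : Set G}
    (hP : IsBiOrderCone P) (hQ : IsBiOrderCone Q) (hφ : ∀ g, MapsTo (φ g) P P) :
    IsBiOrderCone (lexCone φ P Q) where
  mul_mem := by
    rintro x (hx | ⟨hx1, hx⟩) y (hy | ⟨hy1, hy⟩)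
    · exact Or.inl (hQ.mul_mem _ hx _ hy)
    · exact Or.inl (by simpa [hy1] using hx)
    · exact Or.inl (by simpa [hx1] using hy)
    · exact Or.inr ⟨by simp [hx1, hy1], by simpa [hx1] using hP.mul_mem _ hx _ hy⟩
  one_notMem := by
    rintro (h | ⟨-, h⟩)
    · exact hQ.one_notMem h
    · exact hP.one_notMem h
  mem_or_inv_mem x hx := by
    by_cases hr : x.right = 1
    · have hl : x.left ≠ 1 := fun hl => hx (SemidirectProduct.ext hl hr)
      rcases hP.mem_or_inv_mem _ hl with h | h
      · exact Or.inl (Or.inr ⟨hr, h⟩)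
      · exact Or.inr (Or.inr ⟨by simp [hr], by simpa [hr] using h⟩)
    · exact (hQ.mem_or_inv_mem _ hr).imp Or.inl (fun h => Or.inl (by simpa using h))
  conj_mem := by
    rintro x (hx | ⟨hx1, hx⟩) y
    · exact Or.inl (by simpa using hQ.conj_mem _ hx y.right)
    · refine Or.inr ⟨by simp [hx1], ?_⟩
      simpa [hx1, MulAut.inv_apply] using hφ y.right⁻¹ (hP.conj_mem _ hx y.left)

end SemidirectProduct

namespace Matrix

variable {R : Type*} [CommRing R]

theorem trace_eq_add_of_charpoly_eq [Nontrivial R] {M : Matrix (Fin 2) (Fin 2) R} {a b : R}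
    (h : M.charpoly = (X - C a) * (X - C b)) : M.trace = a + b := by
  have h1 := congrArg (coeff · 1) h
  simp [charpoly_fin_two, coeff_X, coeff_C, mul_sub, sub_mul] at h1
  linear_combination -h1

theorem exists_mulVec_eq_smul_of_isRoot_charpoly {K n : Type*} [Field K] [Fintype n]
    [DecidableEq n] {M : Matrix n n K} {μ : K} (h : M.charpoly.IsRoot μ) :
    ∃ v ≠ 0, M *ᵥ v = μ • v := by
  rw [IsRoot, eval_charpoly, ← exists_mulVec_eq_zero_iff] at h
  obtain ⟨v, hv0, hv⟩ := h
  refine ⟨v, hv0, ?_⟩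
  rw [sub_mulVec, scalar_apply, ← smul_one_eq_diagonal, smul_mulVec, one_mulVec, sub_eq_zero] at hv
  exact hv.symm

theorem det_of_mulVec_add_det_of_mulVec (M : Matrix (Fin 2) (Fin 2) R) (w v : Fin 2 → R) :
    det (of ![M *ᵥ w, v]) + det (of ![w, M *ᵥ v]) = M.trace * det (of ![w, v]) := by
  simp [det_fin_two, trace_fin_two, mulVec_eq_sum]
  ring

end Matrix

-- The sign of `sideOfLine v g` tells on which side of the line `ℝ v` the lattice point `g` lies.
noncomputable def sideOfLine (v : Fin 2 → ℝ) : (Fin 2 → ℤ) →+ ℝ where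
  toFun g := det (of ![fun i => (g i : ℝ), v])
  map_zero' := by simp [det_fin_two]
  map_add' g h := by
    simp only [det_fin_two, of_apply, Matrix.cons_val_zero, Matrix.cons_val_one, Pi.add_apply]
    push_cast
    ring

theorem sideOfLine_apply (v : Fin 2 → ℝ) (g : Fin 2 → ℤ) :
    sideOfLine v g = g 0 * v 1 - g 1 * v 0 := by
  simp [sideOfLine, det_fin_two]

theorem sideOfLine_injective {v : Fin 2 → ℝ} (hv : Irrational (v 0 / v 1)) :
    Injective (sideOfLine v) := by
  -- `v 0 / 0 = 0` is rational
  have hv1 : v 1 ≠ 0 := fun h => hv.ne_zero (by simp [h])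
  refine (injective_iff_map_eq_zero _).2 fun g hg => ?_
  rw [sideOfLine_apply, sub_eq_zero] at hg
  by_cases hg1 : g 1 = 0
  · have hg0 : g 0 = 0 := by simpa [hg1, hv1] using hg
    ext i; fin_cases i <;> simp [hg0, hg1]
  · refine absurd hv fun hirr => (Rat.not_irrational ((g 0 / g 1 : ℚ))) ?_
    convert hirr using 1
    push_cast
    field_simp
    linear_combination hg

theorem sideOfLine_mulVec {M : Matrix (Fin 2) (Fin 2) ℤ} {v : Fin 2 → ℝ} {a b : ℝ}
    (hv : M.map ((↑) : ℤ → ℝ) *ᵥ v = b • v) (htr : (M.map ((↑) : ℤ → ℝ)).trace = a + b)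
    (g : Fin 2 → ℤ) : sideOfLine v (M *ᵥ g) = a * sideOfLine v g := by
  have key := det_of_mulVec_add_det_of_mulVec (M.map ((↑) : ℤ → ℝ)) (fun i => (g i : ℝ)) v
  rw [hv, htr] at key
  have hcast : (fun i => ((M *ᵥ g) i : ℝ)) = M.map ((↑) : ℤ → ℝ) *ᵥ fun i => (g i : ℝ) := by
    ext i; simp [mulVec, dotProduct]
  simp only [sideOfLine, AddMonoidHom.coe_mk, ZeroHom.coe_mk, hcast]
  simp only [det_fin_two, of_apply, Matrix.cons_val_zero, Matrix.cons_val_one, Pi.smul_apply,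
    smul_eq_mul] at key ⊢
  linear_combination key

theorem torusBundleGroup_biOrderable_general (A : GL (Fin 2) ℤ) (lam₁ lam₂ : ℝ)
    (hchar : ((A : Matrix (Fin 2) (Fin 2) ℤ).map ((↑·) : ℤ → ℝ)).charpoly =
      (X - C lam₁) * (X - C lam₂))
    (hpos : 0 < lam₁)
    (hirr : ∀ (lam : ℝ) (v : Fin 2 → ℝ), v ≠ 0 →
      ((A : Matrix (Fin 2) (Fin 2) ℤ).map ((↑·) : ℤ → ℝ)).mulVec v = lam • v →
      Irrational (v 0 / v 1)) :
    (∃ P : Set (Fin 2 → ℤ),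
        (∀ a ∈ P, ∀ b ∈ P, a + b ∈ P) ∧
        (∀ g : Fin 2 → ℤ, g ≠ 0 → Xor' (g ∈ P) (-g ∈ P)) ∧
        (∀ v ∈ P, (A : Matrix (Fin 2) (Fin 2) ℤ).mulVec v ∈ P)) ∧
      IsBiOrderable (SemidirectProduct (Multiplicative (Fin 2 → ℤ))
        (Multiplicative ℤ) (monodromy A)) := by
  obtain ⟨v, hv0, hv⟩ := exists_mulVec_eq_smul_of_isRoot_charpoly
    (M := (A : Matrix (Fin 2) (Fin 2) ℤ).map ((↑·) : ℤ → ℝ)) (μ := lam₂) (by simp [hchar])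
  have hscale := sideOfLine_mulVec hv (trace_eq_add_of_charpoly_eq hchar)
  set P : Set (Multiplicative (Fin 2 → ℤ)) :=
    (sideOfLine v).toMultiplicative ⁻¹' {x | 1 < x}
  have hP : IsBiOrderCone P :=
    (isBiOrderCone_one_lt _).comap _ (sideOfLine_injective (hirr lam₂ v hv0 hv))
  have hAP : MapsTo (glAut A) P P := fun x (hx : 0 < sideOfLine v x.toAdd) =>
    show 0 < sideOfLine v (A.1 *ᵥ x.toAdd) by rw [hscale]; positivity
  refine ⟨⟨{g | Multiplicative.ofAdd g ∈ P}, fun a ha b hb => hP.mul_mem _ ha _ hb,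
    fun g hg => hP.xor_mem_inv (g := .ofAdd g) (by simpa using hg), fun g hg => hAP hg⟩, ?_⟩
  have hmono : ∀ n, MapsTo (monodromy A n) P P := fun n => by
    rw [monodromy, zpowersHom_apply]
    exact hP.mapsTo_zpow hAP n.toAdd
  exact (SemidirectProduct.isBiOrderCone_lexCone hP (isBiOrderCone_one_lt _) hmono).isBiOrderable

/-- If `A ∈ GL₂(ℤ)` has two distinct real eigenvalues, at least one of which is
positive, and all its real eigenvectors have irrational slope, then there is a
bi-ordering of `ℤ²` whose positive cone is invariant under `A`; consequently the
semidirect product `ℤ² ⋊_A ℤ` (the fundamental group of the torus bundle with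
monodromy `A`) is bi-orderable. -/
theorem torusBundleGroup_biOrderable (A : GL (Fin 2) ℤ) (lam₁ lam₂ : ℝ)
    (hchar : ((A : Matrix (Fin 2) (Fin 2) ℤ).map ((↑·) : ℤ → ℝ)).charpoly =
      (X - C lam₁) * (X - C lam₂))
    (hne : lam₁ ≠ lam₂) (hpos : 0 < lam₁)
    (hirr : ∀ (lam : ℝ) (v : Fin 2 → ℝ), v ≠ 0 →
      ((A : Matrix (Fin 2) (Fin 2) ℤ).map ((↑·) : ℤ → ℝ)).mulVec v = lam • v →
      Irrational (v 0 / v 1)) :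
    (∃ P : Set (Fin 2 → ℤ),
        (∀ a ∈ P, ∀ b ∈ P, a + b ∈ P) ∧
        (∀ g : Fin 2 → ℤ, g ≠ 0 → Xor' (g ∈ P) (-g ∈ P)) ∧
        (∀ v ∈ P, (A : Matrix (Fin 2) (Fin 2) ℤ).mulVec v ∈ P)) ∧
      IsBiOrderable (SemidirectProduct (Multiplicative (Fin 2 → ℤ))
        (Multiplicative ℤ) (monodromy A)) :=
  torusBundleGroup_biOrderable_general A lam₁ lam₂ hchar hpos hirr
end

section
/- Let F be the free group on generators x_{i,j} indexed by (i,j) ∈ ℤ², and let φ : F → F be any automorphism that induces on the abelianization the shift x̃_{i,j} ↦ x̃_{i+m,j+n} for some fixed (m,n) ∈ ℤ². Then the bi-ordering of F defined via the Magnus expansion into ℤ[[X_{i,j}]] (comparing power series by the coefficient of the first term, in degree-lexicographic order with subscripts ordered lexicographically, at which they differ) is invariant under φ. -/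
/-- Words in the noncommuting variables `X_{i,j}`, `(i,j) ∈ ℤ²`. -/
abbrev MagnusWord : Type := List (ℤ × ℤ)

/-- Formal power series in the noncommuting variables `X_{i,j}` with integer
coefficients, viewed as coefficient functions on words. -/
abbrev MagnusSeries : Type := MagnusWord → ℤ

/-- The constant series `1`. -/
def oneSeries : MagnusSeries := fun w => if w = [] then 1 else 0

/-- Convolution (Cauchy) product of two series. -/
def convSeries (f g : MagnusSeries) : MagnusSeries := fun w =>
  ∑ i ∈ Finset.range (w.length + 1), f (w.take i) * g (w.drop i)

/-- The Magnus series of a single letter of the free group: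
`x_{i,j} ↦ 1 + X_{i,j}` and `x_{i,j}⁻¹ ↦ 1 - X_{i,j} + X_{i,j}² - ⋯`. -/
def letterSeries : (ℤ × ℤ) × Bool → MagnusSeries
  | (a, true) => fun w => if w = [] ∨ w = [a] then 1 else 0
  | (a, false) => fun w => if ∀ x ∈ w, x = a then (-1 : ℤ) ^ w.length else 0

/-- The Magnus expansion `μ : F → ℤ[[X_{i,j}]]` of an element of the free group
on the generators `x_{i,j}`, `(i,j) ∈ ℤ²`, obtained by multiplying out the
series of the letters of the reduced word. -/
def magnus (u : FreeGroup (ℤ × ℤ)) : MagnusSeries :=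
  ((FreeGroup.toWord u).map letterSeries).foldr convSeries oneSeries

/-- The degree-lexicographic strict order on words: first by degree (length),
then lexicographically, subscripts `(i,j)` being compared lexicographically. -/
def degLexLt (w w' : MagnusWord) : Prop :=
  w.length < w'.length ∨
    (w.length = w'.length ∧
      List.Lex (Prod.Lex ((· < ·) : ℤ → ℤ → Prop) ((· < ·) : ℤ → ℤ → Prop)) w w')

/-- Positivity in the Magnus bi-ordering of the free group: `u` is positive if
the coefficient of the degree-lexicographically first term at which `μ(u)`
differs from `1` is positive. -/
def MagnusPos (u : FreeGroup (ℤ × ℤ)) : Prop :=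
  ∃ w : MagnusWord,
    (∀ w' : MagnusWord, degLexLt w' w → magnus u w' = oneSeries w') ∧
    oneSeries w < magnus u w

/-!
The substitution `X_a ↦ h_a := μ(φ x_a) - 1` turns `μ(u)` into `μ(φ u)`: both sides are
homomorphisms in `u` that agree on generators (the substitution only makes sense on series in
finitely many letters, which is all that is needed). As `φ x_a ≡ x_{a+s}` modulo `[F,F]` and `μ`
has no linear terms on `[F,F]`, `h_a = X_{a+s} + O(2)`. Hence if `μ(u) = 1 + P + O(d+1)` with `P`
homogeneous of degree `d`, then `μ(φ u) = 1 + P' + O(d+1)` where `P'` is `P` with all subscripts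
shifted by `s`. Shifting subscripts preserves the degree-lexicographic order, so the first
nonzero coefficients of `μ(u) - 1` and `μ(φ u) - 1` are equal; `φ⁻¹` induces the shift by `-s`,
which gives the converse.
-/

lemma FreeGroup.exists_map_subtype_val_eq {α : Type*} [DecidableEq α] {p : α → Prop}
    (u : FreeGroup α) (hu : ∀ x ∈ u.toWord, p x.1) :
    ∃ u' : FreeGroup (Subtype p), FreeGroup.map Subtype.val u' = u := by
  refine ⟨FreeGroup.mk (u.toWord.attach.map fun x => (⟨x.1.1, hu x.1 x.2⟩, x.1.2)), ?_⟩
  rw [FreeGroup.map.mk, List.map_map]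
  conv_rhs => rw [← FreeGroup.mk_toWord (x := u)]
  congr 1
  simpa [Function.comp_def] using List.attach_map_subtype_val u.toWord

lemma map_mem_commutator_of_mulEquiv {G : Type*} [Group G] (φ : G ≃* G) {g : G}
    (hg : g ∈ commutator G) : φ g ∈ commutator G :=
  Subgroup.characteristic_iff_le_comap.mp inferInstance φ hg

lemma List.Lex.map {α β : Type*} {r : α → α → Prop} {r' : β → β → Prop} (f : α → β)
    (hf : ∀ a b, r a b → r' (f a) (f b)) {l₁ l₂ : List α} (h : List.Lex r l₁ l₂) :
    List.Lex r' (l₁.map f) (l₂.map f) := by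
  induction h with
  | nil => exact List.Lex.nil
  | cons _ ih => exact List.Lex.cons ih
  | rel hab => exact List.Lex.rel (hf _ _ hab)

lemma degLexLt_map_add {w w' : MagnusWord} (s : ℤ × ℤ) (h : degLexLt w w') :
    degLexLt (w.map (· + s)) (w'.map (· + s)) := by
  simp only [degLexLt, List.length_map] at h ⊢
  refine h.imp_right (And.imp_right (List.Lex.map _ fun a b hab => ?_))
  cases hab with
  | left _ _ h => exact Prod.Lex.left _ _ (by simpa using h)
  | right _ h => exact Prod.Lex.right _ (by simpa using h)

lemma oneSeries_map (f : ℤ × ℤ → ℤ × ℤ) (w : MagnusWord) : oneSeries (w.map f) = oneSeries w := by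
  simp [oneSeries]

/-- `MagnusSeries` with the Cauchy product in place of the pointwise one. -/
def NCSeries : Type := MagnusWord → ℤ

namespace NCSeries

def mk (c : MagnusWord → ℤ) : NCSeries := c

def coeff (f : NCSeries) : MagnusWord → ℤ := f

@[simp] lemma coeff_mk (c : MagnusWord → ℤ) : coeff (mk c) = c := rfl

@[ext] lemma ext {f g : NCSeries} (h : ∀ w, coeff f w = coeff g w) : f = g := funext h

instance : AddCommGroup NCSeries := inferInstanceAs (AddCommGroup (MagnusWord → ℤ))
instance : One NCSeries := ⟨oneSeries⟩
instance : Mul NCSeries := ⟨convSeries⟩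

lemma coeff_one (w : MagnusWord) : coeff 1 w = if w = [] then 1 else 0 := rfl
@[simp] lemma coeff_one_nil : coeff 1 [] = 1 := rfl
lemma coeff_one_of_ne_nil {w : MagnusWord} (hw : w ≠ []) : coeff 1 w = 0 := if_neg hw
@[simp] lemma coeff_zero (w : MagnusWord) : coeff 0 w = 0 := rfl
@[simp] lemma coeff_add (f g : NCSeries) (w : MagnusWord) :
    coeff (f + g) w = coeff f w + coeff g w := rfl
@[simp] lemma coeff_sub (f g : NCSeries) (w : MagnusWord) :
    coeff (f - g) w = coeff f w - coeff g w := rfl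

lemma coeff_mul_eq_sum_range (f g : NCSeries) (w : MagnusWord) :
    coeff (f * g) w
      = ∑ i ∈ Finset.range (w.length + 1), coeff f (w.take i) * coeff g (w.drop i) := rfl

def splits (w : MagnusWord) : Finset (MagnusWord × MagnusWord) :=
  (Finset.range (w.length + 1)).image fun i => (w.take i, w.drop i)

@[simp] lemma mem_splits {w : MagnusWord} {p : MagnusWord × MagnusWord} :
    p ∈ splits w ↔ p.1 ++ p.2 = w := by
  simp only [splits, Finset.mem_image, Finset.mem_range]
  constructor
  · rintro ⟨i, -, rfl⟩
    exact List.take_append_drop i w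
  · rintro rfl
    exact ⟨p.1.length, by simp, by simp⟩

lemma coeff_mul (f g : NCSeries) (w : MagnusWord) :
    coeff (f * g) w = ∑ p ∈ splits w, coeff f p.1 * coeff g p.2 := by
  rw [coeff_mul_eq_sum_range, splits, Finset.sum_image]
  intro i hi j hj hij
  simp only [Finset.coe_range, Set.mem_Iio] at hi hj
  simpa [Nat.lt_succ_iff.mp hi, Nat.lt_succ_iff.mp hj] using congrArg (List.length ∘ Prod.fst) hij

protected lemma mul_assoc (f g h : NCSeries) : f * g * h = f * (g * h) := by
  ext w
  simp only [coeff_mul, Finset.sum_mul, Finset.mul_sum, Finset.sum_sigma']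
  apply Finset.sum_nbij' (fun ⟨⟨_, z⟩, ⟨x, y⟩⟩ ↦ ⟨(x, y ++ z), (y, z)⟩)
    (fun ⟨⟨x, _⟩, ⟨y, z⟩⟩ ↦ ⟨(x ++ y, z), (x, y)⟩) <;> aesop (add simp [mul_assoc])

protected lemma one_mul (f : NCSeries) : 1 * f = f := by
  ext w
  rw [coeff_mul, Finset.sum_eq_single ([], w)]
  · simp
  · rintro ⟨x, y⟩ hxy hne
    rcases eq_or_ne x [] with rfl | hx
    · simp_all
    · rw [coeff_one_of_ne_nil hx, zero_mul]
  · simp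

protected lemma mul_one (f : NCSeries) : f * 1 = f := by
  ext w
  rw [coeff_mul, Finset.sum_eq_single (w, [])]
  · simp
  · rintro ⟨x, y⟩ hxy hne
    rcases eq_or_ne y [] with rfl | hy
    · simp_all
    · rw [coeff_one_of_ne_nil hy, mul_zero]
  · simp

instance : Ring NCSeries where
  mul_assoc := NCSeries.mul_assoc
  one_mul := NCSeries.one_mul
  mul_one := NCSeries.mul_one
  left_distrib f g h := by ext w; simp [coeff_mul, mul_add, Finset.sum_add_distrib]
  right_distrib f g h := by ext w; simp [coeff_mul, add_mul, Finset.sum_add_distrib]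
  zero_mul f := by ext w; simp [coeff_mul]
  mul_zero f := by ext w; simp [coeff_mul]

def X (a : ℤ × ℤ) : NCSeries := mk fun w => if w = [a] then 1 else 0

lemma coeff_X (a : ℤ × ℤ) (w : MagnusWord) : coeff (X a) w = if w = [a] then 1 else 0 := rfl

lemma coeff_X_mul_nil (a : ℤ × ℤ) (f : NCSeries) : coeff (X a * f) [] = 0 := by
  simp [coeff_mul_eq_sum_range, coeff_X]

lemma coeff_X_mul_cons (a b : ℤ × ℤ) (f : NCSeries) (t : MagnusWord) :
    coeff (X a * f) (b :: t) = if b = a then coeff f t else 0 := by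
  rw [coeff_mul, Finset.sum_eq_single ([b], t)]
  · by_cases hb : b = a <;> simp [coeff_X, hb]
  · rintro ⟨x, y⟩ hxy hne
    rw [coeff_X, if_neg, zero_mul]
    rintro rfl
    simp_all
  · simp

lemma coeff_mul_X_nil (a : ℤ × ℤ) (f : NCSeries) : coeff (f * X a) [] = 0 := by
  simp [coeff_mul_eq_sum_range, coeff_X]

lemma coeff_mul_X_concat (a b : ℤ × ℤ) (f : NCSeries) (t : MagnusWord) :
    coeff (f * X a) (t ++ [b]) = if b = a then coeff f t else 0 := by
  rw [coeff_mul, Finset.sum_eq_single (t, [b])]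
  · by_cases hb : b = a <;> simp [coeff_X, hb]
  · rintro ⟨x, y⟩ hxy hne
    rw [coeff_X, if_neg, mul_zero]
    rintro rfl
    simp_all
  · simp

lemma letterSeries_true (a : ℤ × ℤ) : mk (letterSeries (a, true)) = 1 + X a := by
  ext w
  by_cases h : w = [] <;> simp [letterSeries, coeff_one, coeff_X, h]

lemma letterSeries_false_cons (a b : ℤ × ℤ) (t : MagnusWord) :
    letterSeries (a, false) (b :: t) = if b = a then -letterSeries (a, false) t else 0 := by
  rcases eq_or_ne b a with rfl | hb
  · simp only [letterSeries, List.forall_mem_cons, true_and, List.length_cons, pow_succ, if_true]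
    split_ifs <;> simp
  · simp only [letterSeries, if_neg hb]
    exact if_neg fun h => hb (h b (by simp))

lemma letterSeries_false_concat (a b : ℤ × ℤ) (t : MagnusWord) :
    letterSeries (a, false) (t ++ [b]) = if b = a then -letterSeries (a, false) t else 0 := by
  rcases eq_or_ne b a with rfl | hb
  · simp only [letterSeries, List.forall_mem_append, List.forall_mem_singleton, and_true,
      List.length_append, List.length_singleton, pow_succ, if_true]
    split_ifs <;> simp
  · simp only [letterSeries, if_neg hb]
    exact if_neg fun h => hb (h b (by simp))

def letterUnit (a : ℤ × ℤ) : NCSeriesˣ where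
  val := mk (letterSeries (a, true))
  inv := mk (letterSeries (a, false))
  val_inv := by
    rw [letterSeries_true, add_mul, one_mul]
    ext w
    rcases w with _ | ⟨b, t⟩
    · simp [coeff_X_mul_nil, letterSeries]
    · rw [coeff_add, coeff_X_mul_cons, coeff_one_of_ne_nil (List.cons_ne_nil b t)]
      simp only [coeff_mk, letterSeries_false_cons]
      split_ifs <;> simp
  inv_val := by
    rw [letterSeries_true, mul_add, mul_one]
    ext w
    rcases List.eq_nil_or_concat' w with rfl | ⟨t, b, rfl⟩
    · simp [coeff_mul_X_nil, letterSeries]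
    · rw [coeff_add, coeff_mul_X_concat, coeff_one_of_ne_nil (by simp)]
      simp only [coeff_mk, letterSeries_false_concat]
      split_ifs <;> simp

def magnusHom : FreeGroup (ℤ × ℤ) →* NCSeriesˣ := FreeGroup.lift letterUnit

lemma magnusHom_of (a : ℤ × ℤ) : (magnusHom (FreeGroup.of a) : NCSeries) = 1 + X a := by
  rw [magnusHom, FreeGroup.lift_apply_of]
  exact letterSeries_true a

lemma magnus_eq_coeff_magnusHom (u : FreeGroup (ℤ × ℤ)) :
    magnus u = coeff (magnusHom u) := by
  have hfold : ∀ L : List ((ℤ × ℤ) × Bool), (L.map letterSeries).foldr convSeries oneSeries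
      = coeff ((L.map fun x => cond x.2 (letterUnit x.1) (letterUnit x.1)⁻¹).prod : NCSeriesˣ) := by
    intro L
    induction L with
    | nil => rfl
    | cons x L ih =>
      obtain ⟨a, _ | _⟩ := x <;>
      · simp only [List.map_cons, List.foldr_cons, List.prod_cons, Units.val_mul, ih]
        rfl
  rw [magnus, hfold, magnusHom, ← FreeGroup.lift_mk, FreeGroup.mk_toWord]

def constantCoeff : NCSeries →+* ℤ where
  toFun f := coeff f []
  map_one' := rfl
  map_mul' f g := by simp [coeff_mul_eq_sum_range]
  map_zero' := rfl
  map_add' _ _ := rfl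

lemma coeff_magnusHom_nil (u : FreeGroup (ℤ × ℤ)) : coeff (magnusHom u) [] = 1 := by
  have h : (Units.map constantCoeff.toMonoidHom).comp magnusHom = 1 := by
    ext a
    show coeff (magnusHom (FreeGroup.of a)) [] = 1
    simp [magnusHom_of, coeff_X]
  exact congrArg Units.val (DFunLike.congr_fun h u)

lemma coeff_magnusHom_sub_one_nil (u : FreeGroup (ℤ × ℤ)) : coeff (magnusHom u - 1) [] = 0 := by
  simp [coeff_magnusHom_nil]

lemma coeff_mul_singleton (f g : NCSeries) (b : ℤ × ℤ) :
    coeff (f * g) [b] = coeff f [] * coeff g [b] + coeff f [b] * coeff g [] := by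
  simp [coeff_mul_eq_sum_range, Finset.sum_range_succ]

def linearCoeffHom (b : ℤ × ℤ) : FreeGroup (ℤ × ℤ) →* Multiplicative ℤ where
  toFun u := Multiplicative.ofAdd (coeff (magnusHom u) [b])
  map_one' := rfl
  map_mul' u v := by
    rw [map_mul, Units.val_mul, coeff_mul_singleton, coeff_magnusHom_nil, coeff_magnusHom_nil,
      one_mul, mul_one, add_comm, ofAdd_add]

lemma coeff_magnusHom_singleton_of_mem_commutator {c : FreeGroup (ℤ × ℤ)}
    (hc : c ∈ commutator (FreeGroup (ℤ × ℤ))) (b : ℤ × ℤ) : coeff (magnusHom c) [b] = 0 :=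
  congrArg Multiplicative.toAdd (Abelianization.commutator_subset_ker (linearCoeffHom b) hc)

def VanishesBelow (k : ℕ) (f : NCSeries) : Prop := ∀ w : MagnusWord, w.length < k → coeff f w = 0

lemma vanishesBelow_one_iff {f : NCSeries} : VanishesBelow 1 f ↔ coeff f [] = 0 :=
  ⟨fun h => h [] Nat.one_pos,
    fun h w hw => by rwa [List.length_eq_zero_iff.mp (Nat.lt_one_iff.mp hw)]⟩

lemma VanishesBelow.mul {j k : ℕ} {f g : NCSeries} (hf : VanishesBelow j f)
    (hg : VanishesBelow k g) : VanishesBelow (j + k) (f * g) := by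
  intro w hw
  rw [coeff_mul]
  refine Finset.sum_eq_zero fun p hp => ?_
  have hlen : p.1.length + p.2.length = w.length := by
    rw [← List.length_append, mem_splits.mp hp]
  rcases lt_or_ge p.1.length j with h1 | h1
  · rw [hf _ h1, zero_mul]
  · rw [hg _ (by omega), mul_zero]

lemma vanishesBelow_list_prod (l : List NCSeries) (hl : ∀ f ∈ l, VanishesBelow 1 f) :
    VanishesBelow l.length l.prod := by
  induction l with
  | nil => intro w hw; simp at hw
  | cons f l ih =>
    rw [List.prod_cons, List.length_cons, Nat.add_comm]
    exact (hl f List.mem_cons_self).mul (ih fun g hg => hl g (List.mem_cons_of_mem f hg))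

lemma coeff_mul_cons_of_vanishesBelow {f g : NCSeries} {t : MagnusWord} (hf : VanishesBelow 1 f)
    (hg : VanishesBelow t.length g) (b : ℤ × ℤ) :
    coeff (f * g) (b :: t) = coeff f [b] * coeff g t := by
  rw [coeff_mul_eq_sum_range, Finset.sum_eq_single 1]
  · rfl
  · intro i hi hi1
    rcases Nat.lt_or_gt_of_ne hi1 with hi0 | hi2
    · rw [Nat.lt_one_iff.mp hi0, hf _ (by simp), zero_mul]
    · rw [hg _ (by simp at hi ⊢; omega), mul_zero]
  · simp

def wordsLe (T : Finset (ℤ × ℤ)) (k : ℕ) : Finset MagnusWord :=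
  (Finset.range (k + 1)).biUnion fun i => (Fintype.piFinset fun _ : Fin i => T).image List.ofFn

lemma mem_wordsLe {T : Finset (ℤ × ℤ)} {k : ℕ} {v : MagnusWord} :
    v ∈ wordsLe T k ↔ v.length ≤ k ∧ ∀ a ∈ v, a ∈ T := by
  simp only [wordsLe, Finset.mem_biUnion, Finset.mem_range, Finset.mem_image,
    Fintype.mem_piFinset]
  constructor
  · rintro ⟨i, hi, f, hf, rfl⟩
    refine ⟨by simp only [List.length_ofFn]; omega, fun a ha => ?_⟩
    obtain ⟨j, rfl⟩ := List.mem_ofFn.mp ha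
    exact hf j
  · rintro ⟨hlen, hmem⟩
    exact ⟨v.length, by omega, v.get, fun j => hmem _ (v.get_mem j), List.ofFn_get v⟩

lemma wordsLe_mono (T : Finset (ℤ × ℤ)) {k l : ℕ} (hkl : k ≤ l) : wordsLe T k ⊆ wordsLe T l :=
  fun _ hv => mem_wordsLe.mpr ⟨(mem_wordsLe.mp hv).1.trans hkl, (mem_wordsLe.mp hv).2⟩

lemma sum_wordsLe_sum_splits (T : Finset (ℤ × ℤ)) (N : ℕ)
    (G : MagnusWord → MagnusWord × MagnusWord → ℤ) :
    ∑ z ∈ wordsLe T N, ∑ p ∈ splits z, G z p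
      = ∑ p ∈ (wordsLe T N ×ˢ wordsLe T N).filter (fun p => p.1.length + p.2.length ≤ N),
          G (p.1 ++ p.2) p := by
  rw [Finset.sum_sigma']
  refine Finset.sum_nbij' (fun q => q.2) (fun p => ⟨p.1 ++ p.2, p⟩) ?_ ?_ ?_ (fun _ _ => rfl) ?_
  · rintro ⟨z, x, y⟩ hq
    simp only [Finset.mem_sigma, mem_splits, mem_wordsLe] at hq
    obtain ⟨⟨hlen, hT⟩, rfl⟩ := hq
    simp only [List.length_append, List.mem_append] at hlen hT
    simp only [Finset.mem_filter, Finset.mem_product, mem_wordsLe]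
    exact ⟨⟨⟨by omega, fun a ha => hT a (Or.inl ha)⟩,
      ⟨by omega, fun a ha => hT a (Or.inr ha)⟩⟩, hlen⟩
  · rintro ⟨x, y⟩ hp
    simp only [Finset.mem_filter, Finset.mem_product, mem_wordsLe] at hp
    simp only [Finset.mem_sigma, mem_splits, mem_wordsLe, List.length_append,
      List.mem_append, and_true]
    exact ⟨hp.2, fun a ha => ha.elim (hp.1.1.2 a) (hp.1.2.2 a)⟩
  all_goals
    rintro ⟨z, x, y⟩ hq
    obtain rfl : x ++ y = z := mem_splits.mp (Finset.mem_sigma.mp hq).2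
    rfl

section Subst

variable (T : Finset (ℤ × ℤ)) (h : ℤ × ℤ → NCSeries)

def evalWord (v : MagnusWord) : NCSeries := (v.map h).prod

lemma evalWord_append (v v' : MagnusWord) :
    evalWord h (v ++ v') = evalWord h v * evalWord h v' := by
  simp [evalWord]

/-- The substitution `X_a ↦ h a` on the part of a series in the letters of `T`; on all
letters the coefficients would be infinite sums. -/
def subst (f : NCSeries) : NCSeries :=
  mk fun w => ∑ v ∈ wordsLe T w.length, coeff f v * coeff (evalWord h v) w

variable {h}

lemma coeff_subst_congr {f g : NCSeries} {w : MagnusWord}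
    (hfg : ∀ v : MagnusWord, v.length ≤ w.length → coeff f v = coeff g v) :
    coeff (subst T h f) w = coeff (subst T h g) w :=
  Finset.sum_congr rfl fun v hv => by rw [hfg v (mem_wordsLe.mp hv).1]

variable (hh : ∀ a, coeff (h a) [] = 0)
include hh

lemma vanishesBelow_evalWord (v : MagnusWord) : VanishesBelow v.length (evalWord h v) := by
  have := vanishesBelow_list_prod (v.map h) fun f hf => by
    obtain ⟨a, -, rfl⟩ := List.mem_map.mp hf
    exact vanishesBelow_one_iff.mpr (hh a)
  rwa [List.length_map] at this

lemma coeff_subst_of_length_le (f : NCSeries) {w : MagnusWord} {N : ℕ} (hw : w.length ≤ N) :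
    coeff (subst T h f) w = ∑ v ∈ wordsLe T N, coeff f v * coeff (evalWord h v) w := by
  refine Finset.sum_subset (wordsLe_mono T hw) fun v hvN hv => ?_
  have hlong : w.length < v.length := by
    by_contra! hle
    exact hv (mem_wordsLe.mpr ⟨hle, (mem_wordsLe.mp hvN).2⟩)
  rw [vanishesBelow_evalWord hh v w hlong, mul_zero]

lemma subst_mul (f g : NCSeries) : subst T h (f * g) = subst T h f * subst T h g := by
  ext w
  have hsplit : ∀ q ∈ splits w, q.1.length ≤ w.length ∧ q.2.length ≤ w.length := fun q hq => by
    have := congrArg List.length (mem_splits.mp hq)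
    simp only [List.length_append] at this
    omega
  calc coeff (subst T h (f * g)) w
      = ∑ z ∈ wordsLe T w.length, ∑ p ∈ splits z,
          coeff f p.1 * coeff g p.2 * coeff (evalWord h z) w := by
        simp only [subst, coeff_mk, coeff_mul, Finset.sum_mul]
    _ = ∑ p ∈ (wordsLe T w.length ×ˢ wordsLe T w.length).filter
          (fun p => p.1.length + p.2.length ≤ w.length),
          coeff f p.1 * coeff g p.2 * coeff (evalWord h (p.1 ++ p.2)) w :=
        sum_wordsLe_sum_splits T w.length fun z p =>
          coeff f p.1 * coeff g p.2 * coeff (evalWord h z) w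
    _ = ∑ p ∈ wordsLe T w.length ×ˢ wordsLe T w.length,
          coeff f p.1 * coeff g p.2 * coeff (evalWord h (p.1 ++ p.2)) w := by
        refine Finset.sum_subset (Finset.filter_subset _ _) fun p hp hpN => ?_
        have hlong : w.length < (p.1 ++ p.2).length := by
          simpa [hp] using hpN
        rw [vanishesBelow_evalWord hh _ w hlong, mul_zero]
    _ = ∑ q ∈ splits w, (∑ x ∈ wordsLe T w.length, coeff f x * coeff (evalWord h x) q.1) *
          ∑ y ∈ wordsLe T w.length, coeff g y * coeff (evalWord h y) q.2 := by
        simp_rw [Finset.sum_mul_sum, Finset.sum_product, evalWord_append, coeff_mul,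
          Finset.mul_sum]
        conv_rhs => rw [Finset.sum_comm]
        refine Finset.sum_congr rfl fun x _ => ?_
        rw [Finset.sum_comm]
        exact Finset.sum_congr rfl fun y _ => Finset.sum_congr rfl fun q _ => by ring
    _ = coeff (subst T h f * subst T h g) w := by
        rw [coeff_mul]
        refine Finset.sum_congr rfl fun q hq => ?_
        rw [coeff_subst_of_length_le T hh f (hsplit q hq).1,
          coeff_subst_of_length_le T hh g (hsplit q hq).2]

def substHom : NCSeries →+* NCSeries where
  toFun := subst T h
  map_one' := by
    ext w
    rw [subst, coeff_mk, Finset.sum_eq_single []]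
    · simp [evalWord]
    · intro v _ hv
      rw [coeff_one_of_ne_nil hv, zero_mul]
    · simp [mem_wordsLe]
  map_mul' := subst_mul T hh
  map_zero' := by ext w; simp [subst]
  map_add' f g := by ext w; simp [subst, add_mul, Finset.sum_add_distrib]

lemma substHom_apply (f : NCSeries) : substHom T hh f = subst T h f := rfl

lemma subst_X {a : ℤ × ℤ} (ha : a ∈ T) : subst T h (X a) = h a := by
  ext w
  rw [coeff_subst_of_length_le T hh _ (le_max_left w.length 1), Finset.sum_eq_single [a]]
  · simp [coeff_X, evalWord]
  · intro v _ hv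
    rw [coeff_X, if_neg hv, zero_mul]
  · simp [mem_wordsLe, ha]

lemma coeff_evalWord_of_length_eq {σ : ℤ × ℤ → ℤ × ℤ}
    (hσ : ∀ a b, coeff (h a) [b] = if b = σ a then 1 else 0) :
    ∀ {v w : MagnusWord}, v.length = w.length →
      coeff (evalWord h v) w = if w = v.map σ then 1 else 0
  | [], [], _ => rfl
  | a :: v, b :: w, hvw => by
    have hw : v.length = w.length := Nat.succ.inj hvw
    rw [evalWord, List.map_cons, List.prod_cons,
      coeff_mul_cons_of_vanishesBelow (vanishesBelow_one_iff.mpr (hh a))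
        (hw ▸ vanishesBelow_evalWord hh v),
      hσ, ← evalWord, coeff_evalWord_of_length_eq hσ hw]
    simp only [List.map_cons, List.cons.injEq, ite_and]
    split_ifs <;> simp

lemma subst_sub_one_vanishesBelow {f : NCSeries} {d : ℕ} (hf : VanishesBelow d (f - 1)) :
    VanishesBelow d (subst T h f - 1) := by
  intro w hw
  rw [coeff_sub, coeff_subst_congr T (g := 1) fun v hv => sub_eq_zero.mp (hf v (by omega)),
    ← substHom_apply T hh, map_one, sub_self]

lemma coeff_subst_map_add {f : NCSeries} {d : ℕ} (hf : VanishesBelow d (f - 1)) {s : ℤ × ℤ}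
    (hs : ∀ a b, coeff (h a) [b] = if b = a + s then 1 else 0)
    {w : MagnusWord} (hwd : w.length = d) (hwT : ∀ a ∈ w, a ∈ T) :
    coeff (subst T h f) (w.map (· + s)) = coeff f w := by
  have hlen : (w.map (· + s)).length = d := by rw [List.length_map, hwd]
  have hone : coeff 1 (w.map (· + s)) = coeff 1 w := by simp [coeff_one]
  have hlead : coeff (subst T h (f - 1)) (w.map (· + s)) = coeff (f - 1) w := by
    rw [coeff_subst_of_length_le T hh _ hlen.le, Finset.sum_eq_single w]
    · rw [coeff_evalWord_of_length_eq hh hs (by rw [hlen, hwd]), if_pos rfl, mul_one]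
    · intro v hv hvw
      rcases (mem_wordsLe.mp hv).1.lt_or_eq with hvd | hvd
      · rw [hf v hvd, zero_mul]
      · rw [coeff_evalWord_of_length_eq hh hs (by rw [hlen, hvd]), if_neg, mul_zero]
        exact fun hmap => hvw ((List.map_injective_iff.mpr (add_left_injective s)) hmap).symm
    · exact fun hw => absurd (mem_wordsLe.mpr ⟨hwd.le, hwT⟩) hw
  rw [← sub_add_cancel f 1, ← substHom_apply T hh, map_add, map_one, substHom_apply, coeff_add,
    hlead, hone, coeff_add]

end Subst

lemma magnusHom_map_eq_subst (φ : FreeGroup (ℤ × ℤ) →* FreeGroup (ℤ × ℤ)) (T : Finset (ℤ × ℤ))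
    (u : FreeGroup (ℤ × ℤ)) (hu : ∀ x ∈ u.toWord, x.1 ∈ T) :
    (magnusHom (φ u) : NCSeries)
      = subst T (fun a => magnusHom (φ (FreeGroup.of a)) - 1) (magnusHom u) := by
  have hh a := coeff_magnusHom_sub_one_nil (φ (FreeGroup.of a))
  obtain ⟨u, rfl⟩ := FreeGroup.exists_map_subtype_val_eq (p := (· ∈ T)) u hu
  have hext : (magnusHom.comp φ).comp (FreeGroup.map ((↑) : T → ℤ × ℤ))
      = (Units.map (substHom T hh).toMonoidHom).comp
          (magnusHom.comp (FreeGroup.map ((↑) : T → ℤ × ℤ))) := by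
    refine FreeGroup.ext_hom _ _ fun ⟨a, ha⟩ => Units.ext ?_
    change (magnusHom (φ (FreeGroup.of a)) : NCSeries)
      = substHom T hh (magnusHom (FreeGroup.of a))
    rw [magnusHom_of, map_add, map_one, substHom_apply, subst_X T hh ha, add_sub_cancel]
  exact congrArg Units.val (DFunLike.congr_fun hext u)

lemma magnusHom_map_sub_one_vanishesBelow (φ : FreeGroup (ℤ × ℤ) →* FreeGroup (ℤ × ℤ))
    {u : FreeGroup (ℤ × ℤ)} {d : ℕ} (hu : VanishesBelow d (magnusHom u - 1)) :
    VanishesBelow d (magnusHom (φ u) - 1) := by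
  rw [magnusHom_map_eq_subst φ (u.toWord.map Prod.fst).toFinset u (by simp +contextual)]
  exact subst_sub_one_vanishesBelow _ (fun a => coeff_magnusHom_sub_one_nil _) hu

section Shift

variable {s : ℤ × ℤ} {φ : FreeGroup (ℤ × ℤ) →* FreeGroup (ℤ × ℤ)}
  (hφ : ∀ p, φ (FreeGroup.of p) * (FreeGroup.of (p + s))⁻¹ ∈ commutator (FreeGroup (ℤ × ℤ)))
include hφ

lemma coeff_magnusHom_map_of_singleton (a b : ℤ × ℤ) :
    coeff (magnusHom (φ (FreeGroup.of a))) [b] = if b = a + s then 1 else 0 := by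
  have hsplit : φ (FreeGroup.of a)
      = φ (FreeGroup.of a) * (FreeGroup.of (a + s))⁻¹ * FreeGroup.of (a + s) := by group
  rw [hsplit, map_mul, Units.val_mul, coeff_mul_singleton, coeff_magnusHom_nil,
    coeff_magnusHom_singleton_of_mem_commutator (hφ a), magnusHom_of]
  simp [coeff_X, coeff_one]

lemma coeff_magnusHom_map_map_add {u : FreeGroup (ℤ × ℤ)} {d : ℕ}
    (hu : VanishesBelow d (magnusHom u - 1)) {w : MagnusWord} (hw : w.length = d) :
    coeff (magnusHom (φ u)) (w.map (· + s)) = coeff (magnusHom u) w := by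
  set T := (u.toWord.map Prod.fst ++ w).toFinset
  rw [magnusHom_map_eq_subst φ T u (by simp +contextual [T])]
  refine coeff_subst_map_add T (fun a => coeff_magnusHom_sub_one_nil _) hu
    (fun a b => by rw [coeff_sub, coeff_magnusHom_map_of_singleton hφ]; simp [coeff_one]) hw
    fun a ha => by simp [T, ha]

end Shift

end NCSeries

open NCSeries in
lemma magnusPos_map_of_shift {s : ℤ × ℤ} {φ : FreeGroup (ℤ × ℤ) →* FreeGroup (ℤ × ℤ)}
    (hφ : ∀ p, φ (FreeGroup.of p) * (FreeGroup.of (p + s))⁻¹ ∈ commutator (FreeGroup (ℤ × ℤ)))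
    {u : FreeGroup (ℤ × ℤ)} (hu : MagnusPos u) : MagnusPos (φ u) := by
  simp only [MagnusPos, magnus_eq_coeff_magnusHom] at hu ⊢
  obtain ⟨w₀, hlow, hpos⟩ := hu
  have hvan : VanishesBelow w₀.length (magnusHom u - 1) := fun v hv =>
    sub_eq_zero.mpr (hlow v (Or.inl hv))
  have hlead : ∀ v : MagnusWord, v.length = w₀.length →
      coeff (magnusHom (φ u)) (v.map (· + s)) = coeff (magnusHom u) v :=
    fun v hv => coeff_magnusHom_map_map_add hφ hvan hv
  refine ⟨w₀.map (· + s), fun w hw => ?_, by rwa [hlead w₀ rfl, oneSeries_map]⟩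
  rcases hw with hlt | ⟨hlen, hlex⟩
  · exact sub_eq_zero.mp
      (magnusHom_map_sub_one_vanishesBelow φ hvan w (by simpa using hlt))
  · obtain ⟨v, rfl⟩ : ∃ v : MagnusWord, v.map (· + s) = w :=
      ⟨w.map (· + -s), by simp [Function.comp_def]⟩
    have hv : degLexLt v w₀ := by
      simpa [Function.comp_def] using degLexLt_map_add (-s) (Or.inr ⟨hlen, hlex⟩)
    rw [hlead v (by simpa using hlen), hlow v hv, oneSeries_map]

/-- The Magnus bi-ordering of the free group `F` on generators `x_{i,j}`,
`(i,j) ∈ ℤ²`, is invariant under any automorphism `φ` of `F` inducing on the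
abelianization the uniform shift `x̃_{i,j} ↦ x̃_{i+m,j+n}`. -/
theorem magnus_ordering_invariant_under_shift_automorphism
    (m n : ℤ) (φ : FreeGroup (ℤ × ℤ) ≃* FreeGroup (ℤ × ℤ))
    (hφ : ∀ p : ℤ × ℤ,
      φ (FreeGroup.of p) * (FreeGroup.of (p.1 + m, p.2 + n))⁻¹ ∈
        commutator (FreeGroup (ℤ × ℤ))) :
    ∀ u : FreeGroup (ℤ × ℤ), MagnusPos (φ u) ↔ MagnusPos u := by
  have hsymm : ∀ p, φ.symm (FreeGroup.of p) * (FreeGroup.of (p + -(m, n)))⁻¹ ∈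
      commutator (FreeGroup (ℤ × ℤ)) := fun p => by
    simpa using map_mem_commutator_of_mulEquiv φ.symm (inv_mem (hφ (p + -(m, n))))
  intro u
  exact ⟨fun h => by simpa using magnusPos_map_of_shift (φ := φ.symm.toMonoidHom) hsymm h,
    magnusPos_map_of_shift (s := (m, n)) (φ := φ.toMonoidHom) hφ⟩
end
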